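/- arXiv:2408.15962 — 5 statements merged into one kernel-verified Lean document; each statement's English description precedes it below -/
import Mathlib

section
/- Suppose β(ω) < ∞ and E ∈ ℝ, and let C > 1 be a constant (depending only on ω and v) for which the large deviation estimate holds: for every δ ∈ (0, 1/(β(ω)+1)) and all sufficiently large m, the Lebesgue measure of {θ ∈ 𝕋 : |u_{m,E}(θ) − L_m(ω,E)| > 2·κ(ω,E)·β(ω) + C·δ} is at most e^{−δ⁴·m}. Then for every δ ∈ (0, 1/(β(ω)+1)) there is m₀ such that for all m ≥ m₀ and every real η with |η| ≤ exp(−2m·(κ(ω,E)·β(ω) + 2C·δ)), the Lebesgue measure of the set {θ ∈ 𝕋 : u_{m,E+iη}(θ) < L(ω,E) − 2·κ(ω,E)·β(ω) − 2C·δ} is at most e^{−δ⁴·m}. -/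
/-!
For real `E` the entries of `M_{m,E}(θ)` are, up to sign, characteristic polynomials of finite
Jacobi matrices with real diagonal, so all their zeros are real. Moving `E` off the real axis
therefore cannot decrease the modulus of any entry, and `‖M_{m,E}(θ)‖ ≤ 4 ‖M_{m,E+iη}(θ)‖` for every
real `η`. Hence `u_{m,E+iη}(θ) < L - 2κβ - 2Cδ` forces `u_{m,E}(θ) < L - 2κβ - Cδ` once
`log 4 / m ≤ Cδ`, and since `L ≤ L_m` by subadditivity, `θ` lies in the exceptional set of the
large deviation estimate at the real energy `E`.
-/

open MeasureTheory Filter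

noncomputable section

/-- Distance from `x` to the nearest integer. -/
def distZ (x : ℝ) : ℝ := |x - round x|

/-- One-step transfer matrix. -/
def oneStep (v : ℂ → ℂ) (E : ℂ) (z : ℂ) : Matrix (Fin 2) (Fin 2) ℂ :=
  !![E - v z, -1; 1, 0]

/-- `m`-step transfer matrix. -/
def transfer (v : ℂ → ℂ) (ω : ℝ) (E : ℂ) : ℕ → ℂ → Matrix (Fin 2) (Fin 2) ℂ
  | 0, _ => 1
  | m + 1, z => transfer v ω E m (z + (ω : ℂ)) * oneStep v E z

/-- Operator (`ℓ²`) norm of a 2×2 complex matrix. -/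
def opNorm2 (A : Matrix (Fin 2) (Fin 2) ℂ) : ℝ :=
  ‖Matrix.toEuclideanCLM (𝕜 := ℂ) A‖

/-- `u_{m,E}` at a (complexified) phase. -/
def uFun (v : ℂ → ℂ) (ω : ℝ) (E : ℂ) (m : ℕ) (z : ℂ) : ℝ :=
  (1 / (m : ℝ)) * Real.log (opNorm2 (transfer v ω E m z))

/-- Finite-scale Lyapunov exponent `L_m(ω,E,ε)`. -/
def LyapFS (v : ℂ → ℂ) (ω : ℝ) (E : ℂ) (m : ℕ) (ε : ℝ) : ℝ :=
  ∫ θ in (0:ℝ)..1, uFun v ω E m ((θ : ℂ) + (ε : ℂ) * Complex.I)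

/-- Lyapunov exponent `L(ω,E,ε)` (limit of `L_m`, realized as a `limsup`). -/
def Lyap (v : ℂ → ℂ) (ω : ℝ) (E : ℂ) (ε : ℝ) : ℝ :=
  limsup (fun m : ℕ => LyapFS v ω E m ε) atTop

/-- Avila's acceleration `κ(ω,E)` (right derivative at `ε = 0`, realized as a limsup). -/
def accel (v : ℂ → ℂ) (ω : ℝ) (E : ℂ) : ℝ :=
  limsup (fun ε : ℝ => (Lyap v ω E ε - Lyap v ω E 0) / (2 * Real.pi * ε))
    (nhdsWithin 0 (Set.Ioi 0))

/-- Gauss map. -/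
def gaussMap (x : ℝ) : ℝ := Int.fract x⁻¹

/-- Partial quotients of the continued fraction of `ω`; `cfA ω n = aₙ` for `n ≥ 1`. -/
def cfA (ω : ℝ) (n : ℕ) : ℕ := ⌊(gaussMap^[n - 1] ω)⁻¹⌋₊

/-- Denominators of the continued fraction approximants of `ω`. -/
def cfQ (ω : ℝ) : ℕ → ℕ
  | 0 => 1
  | 1 => cfA ω 1
  | n + 2 => cfA ω (n + 2) * cfQ ω (n + 1) + cfQ ω n

/-- `β(ω) = limsup (log q_{n+1})/q_n`, as an extended real. -/
def betaE (ω : ℝ) : EReal :=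
  limsup (fun n : ℕ => ((Real.log (cfQ ω (n + 1)) / (cfQ ω n : ℝ) : ℝ) : EReal)) atTop

/-- Real value of `β(ω)`. -/
def betaR (ω : ℝ) : ℝ := (betaE ω).toReal

/-- `k`-th Fourier coefficient of a function on `𝕋 = ℝ/ℤ`. -/
def fourierCoeff01 (g : ℝ → ℂ) (k : ℤ) : ℂ :=
  ∫ θ in (0:ℝ)..1, g θ * Complex.exp (-2 * Real.pi * Complex.I * (k : ℂ) * (θ : ℂ))

/-- `k`-th Fourier coefficient of `u_{m,E}`. -/
def uhat (v : ℂ → ℂ) (ω : ℝ) (E : ℂ) (m : ℕ) (k : ℤ) : ℂ :=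
  fourierCoeff01 (fun θ : ℝ => ((uFun v ω E m (θ : ℂ) : ℝ) : ℂ)) k

/-- Fejér kernel along `ω`. -/
def fejer (ω : ℝ) (Q : ℕ) (k : ℤ) : ℂ :=
  ∑ j ∈ Finset.Ioo (-(Q : ℤ)) (Q : ℤ),
    ((((Q : ℝ) - |(j : ℝ)|) / (Q : ℝ) ^ 2 : ℝ) : ℂ) *
      Complex.exp (2 * Real.pi * Complex.I * (k : ℂ) * (j : ℂ) * (ω : ℂ))

/-- Open annulus `𝒜_R`. -/
def annulus (R : ℝ) : Set ℂ := {z : ℂ | 1 / R < ‖z‖ ∧ ‖z‖ < R}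

/-- Closed annulus. -/
def closedAnnulus (R : ℝ) : Set ℂ := {z : ℂ | 1 / R ≤ ‖z‖ ∧ ‖z‖ ≤ R}

/-- Regular part `Γ_R` of the Green's function of the annulus `𝒜_R`. -/
def GammaR (R : ℝ) (z w : ℂ) : ℝ :=
  Real.log (‖z‖ / R) * Real.log (‖w‖ / R) / (4 * Real.pi * Real.log R)
    + (1 / (2 * Real.pi)) * Real.log
      ((∏' k : ℕ, (‖1 - (R : ℂ) ^ (-(4 * ((k : ℤ) + 1))) * z / w‖
          * ‖1 - (R : ℂ) ^ (-(4 * ((k : ℤ) + 1))) * w / z‖))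
        / (R * ∏' k : ℕ, (‖1 - (R : ℂ) ^ (-(4 * ((k : ℤ) + 1) - 2)) * w * (starRingEnd ℂ) z‖
          * ‖1 - (R : ℂ) ^ (-(4 * ((k : ℤ) + 1) - 2)) / ((starRingEnd ℂ) z * w)‖)))

/-- Green's function `G_R` of the annulus `𝒜_R`. -/
def greenR (R : ℝ) (z w : ℂ) : ℝ :=
  (1 / (2 * Real.pi)) * Real.log (‖z - w‖) + GammaR R z w

/-- Second directional derivative of `f : ℂ → ℝ` at `z` in direction `v`. -/
def secondDirDeriv (f : ℂ → ℝ) (v z : ℂ) : ℝ :=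
  deriv (deriv (fun t : ℝ => f (z + t • v))) 0

/-- Harmonicity of `f` on a set `S ⊆ ℂ`. -/
def HarmonicOnSet (f : ℂ → ℝ) (S : Set ℂ) : Prop :=
  ContDiffOn ℝ 2 f S ∧ ∀ z ∈ S, secondDirDeriv f 1 z + secondDirDeriv f Complex.I z = 0

open scoped Matrix Matrix.Norms.L2Operator

theorem EuclideanSpace.norm_le_sum_norm {𝕜 n : Type*} [RCLike 𝕜] [Fintype n]
    (x : EuclideanSpace 𝕜 n) : ‖x‖ ≤ ∑ i, ‖x i‖ := by
  rw [EuclideanSpace.norm_eq, Real.sqrt_le_iff]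
  exact ⟨by positivity, Finset.sum_sq_le_sq_sum_of_nonneg fun _ _ => norm_nonneg _⟩

section L2OpNorm

variable {𝕜 m n : Type*} [RCLike 𝕜] [Fintype m] [Fintype n] [DecidableEq n]

theorem Matrix.norm_entry_le_l2_opNorm (A : Matrix m n 𝕜) (i : m) (j : n) :
    ‖A i j‖ ≤ ‖A‖ := by
  have h := A.l2_opNorm_mulVec (EuclideanSpace.single j 1)
  rw [PiLp.norm_single, norm_one, mul_one] at h
  calc ‖A i j‖
        = ‖(EuclideanSpace.equiv m 𝕜).symm (A *ᵥ (EuclideanSpace.single j 1).ofLp) i‖ := by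
          simp [Matrix.mulVec_single]
    _ ≤ ‖A‖ := (PiLp.norm_apply_le _ i).trans h

theorem Matrix.l2_opNorm_le_sum_norm_entry (A : Matrix m n 𝕜) : ‖A‖ ≤ ∑ i, ∑ j, ‖A i j‖ := by
  refine ContinuousLinearMap.opNorm_le_bound _ (by positivity) fun x => ?_
  refine (EuclideanSpace.norm_le_sum_norm _).trans ?_
  rw [Finset.sum_mul]
  refine Finset.sum_le_sum fun i _ => ?_
  calc ‖(A *ᵥ x.ofLp) i‖ ≤ ∑ j, ‖A i j‖ * ‖x j‖ := by
        simpa [Matrix.mulVec, dotProduct] using norm_sum_le Finset.univ fun j => A i j * x j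
    _ ≤ (∑ j, ‖A i j‖) * ‖x‖ := by
        rw [Finset.sum_mul]
        gcongr with j
        exact PiLp.norm_apply_le x j

theorem Matrix.l2_opNorm_le_of_norm_entry_le {A B : Matrix m n 𝕜}
    (h : ∀ i j, ‖A i j‖ ≤ ‖B i j‖) : ‖A‖ ≤ (Fintype.card m * Fintype.card n) * ‖B‖ := by
  calc ‖A‖ ≤ ∑ i, ∑ j, ‖A i j‖ := A.l2_opNorm_le_sum_norm_entry
    _ ≤ ∑ _i : m, ∑ _j : n, ‖B‖ := by
        gcongr with i _ j
        exact (h i j).trans (B.norm_entry_le_l2_opNorm i j)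
    _ = _ := by simp [mul_assoc]

end L2OpNorm

theorem Matrix.norm_det_fin_two_le {𝕜 : Type*} [RCLike 𝕜] (A : Matrix (Fin 2) (Fin 2) 𝕜) :
    ‖A.det‖ ≤ 2 * ‖A‖ ^ 2 := by
  have e := A.norm_entry_le_l2_opNorm
  calc ‖A.det‖ ≤ ‖A 0 0‖ * ‖A 1 1‖ + ‖A 0 1‖ * ‖A 1 0‖ := by
        rw [Matrix.det_fin_two, ← norm_mul, ← norm_mul]; exact norm_sub_le _ _
    _ ≤ ‖A‖ * ‖A‖ + ‖A‖ * ‖A‖ := by gcongr <;> apply e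
    _ = 2 * ‖A‖ ^ 2 := by ring

theorem opNorm2_eq_l2_opNorm (A : Matrix (Fin 2) (Fin 2) ℂ) : opNorm2 A = ‖A‖ := rfl

theorem Polynomial.norm_eval_re_le_norm_eval {p : Polynomial ℂ} (hp : ∀ r ∈ p.roots, r.im = 0)
    (z : ℂ) : ‖p.eval (z.re : ℂ)‖ ≤ ‖p.eval z‖ := by
  have hnorm : ∀ w : ℂ, ‖p.eval w‖ = ‖p.leadingCoeff‖ * (p.roots.map fun r => ‖w - r‖).prod := by
    intro w
    rw [(IsAlgClosed.splits p).eval_eq_prod_roots, norm_mul]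
    exact congrArg _ ((map_multiset_prod (normHom : ℂ →*₀ ℝ) _).trans
      (congrArg _ (Multiset.map_map _ _ _)))
  rw [hnorm, hnorm]
  gcongr
  refine Multiset.prod_map_le_prod_map₀ _ _ (fun _ _ => norm_nonneg _) fun r hr => ?_
  have hre : (z.re : ℂ) - r = ((z - r).re : ℂ) := by
    apply Complex.ext <;> simp [hp r hr]
  rw [hre, Complex.norm_real, Real.norm_eq_abs]
  exact Complex.abs_re_le_norm (z - r)

section Transfer

open Polynomial

/-- `jacobiPoly v ω (n + 1) θ` is the characteristic polynomial of the `n × n` Jacobi matrix with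
diagonal `v θ, v (θ + ω), …, v (θ + (n - 1) ω)` and off-diagonal entries `1`. -/
def jacobiPoly (v : ℂ → ℂ) (ω : ℝ) : ℕ → ℝ → ℂ[X]
  | 0, _ => 0
  | 1, _ => 1
  | n + 2, θ => (X - C (v θ)) * jacobiPoly v ω (n + 1) (θ + ω) - jacobiPoly v ω n (θ + 2 * ω)

variable {v : ℂ → ℂ} {ω : ℝ} {z : ℂ}

theorem transfer_succ_eq_jacobiPoly (n : ℕ) (θ : ℝ) :
    transfer v ω z (n + 1) θ =
      !![(jacobiPoly v ω (n + 2) θ).eval z, -(jacobiPoly v ω (n + 1) (θ + ω)).eval z;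
         (jacobiPoly v ω (n + 1) θ).eval z, -(jacobiPoly v ω n (θ + ω)).eval z] := by
  induction n generalizing θ with
  | zero =>
    ext i j
    fin_cases i <;> fin_cases j <;> simp [transfer, oneStep, jacobiPoly]
  | succ n ih =>
    have hshift : (θ : ℂ) + ω = ((θ + ω : ℝ) : ℂ) := by push_cast; ring
    rw [transfer, hshift, ih, add_assoc θ, ← two_mul]
    ext i j
    fin_cases i <;> fin_cases j <;> simp [oneStep, jacobiPoly, Matrix.mul_apply] <;> ring

theorem jacobiPoly_herglotz (hreal : ∀ x : ℝ, (v x).im = 0) (hz : z.im ≠ 0) (n : ℕ) (θ : ℝ) :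
    0 < z.im * ((jacobiPoly v ω (n + 2) θ).eval z *
      starRingEnd ℂ ((jacobiPoly v ω (n + 1) (θ + ω)).eval z)).im := by
  induction n generalizing θ with
  | zero =>
    simpa [jacobiPoly, hreal θ] using mul_self_pos.2 hz
  | succ n ih =>
    set A := (jacobiPoly v ω (n + 2) (θ + ω)).eval z
    set B := (jacobiPoly v ω (n + 1) (θ + 2 * ω)).eval z
    have hIH : 0 < z.im * (A * starRingEnd ℂ B).im := by
      simpa [add_assoc, ← two_mul] using ih (θ + ω)
    have hrec : (jacobiPoly v ω (n + 3) θ).eval z = (z - v θ) * A - B := by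
      simp [jacobiPoly, A, B]
    have him : (((z - v θ) * A - B) * starRingEnd ℂ A).im
        = z.im * Complex.normSq A + (A * starRingEnd ℂ B).im := by
      simp [Complex.mul_im, Complex.mul_re, Complex.normSq_apply, hreal θ]
      ring
    rw [hrec, him, mul_add]
    nlinarith [mul_nonneg (mul_self_nonneg z.im) (Complex.normSq_nonneg A)]

theorem im_eq_zero_of_mem_roots_jacobiPoly (hreal : ∀ x : ℝ, (v x).im = 0) (n : ℕ) (θ : ℝ) :
    ∀ r ∈ (jacobiPoly v ω n θ).roots, r.im = 0 := by
  intro r hr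
  match n with
  | 0 => simp [jacobiPoly] at hr
  | 1 => simp [jacobiPoly] at hr
  | n + 2 =>
    by_contra hr_im
    have h := jacobiPoly_herglotz (ω := ω) hreal hr_im n θ
    rw [(isRoot_of_mem_roots hr).eq_zero, zero_mul, Complex.zero_im, mul_zero] at h
    exact h.false

theorem norm_transfer_re_le (hreal : ∀ x : ℝ, (v x).im = 0) (m : ℕ) (θ : ℝ) :
    ‖transfer v ω z.re m θ‖ ≤ 4 * ‖transfer v ω z m θ‖ := by
  cases m with
  | zero => exact le_mul_of_one_le_left (norm_nonneg _) (by norm_num)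
  | succ n =>
    have key (k : ℕ) (t : ℝ) :
        ‖(jacobiPoly v ω k t).eval (z.re : ℂ)‖ ≤ ‖(jacobiPoly v ω k t).eval z‖ :=
      norm_eval_re_le_norm_eval (im_eq_zero_of_mem_roots_jacobiPoly hreal k t) z
    have h := Matrix.l2_opNorm_le_of_norm_entry_le (A := transfer v ω z.re (n + 1) θ)
      (B := transfer v ω z (n + 1) θ) fun i j => by
        rw [transfer_succ_eq_jacobiPoly, transfer_succ_eq_jacobiPoly]
        fin_cases i <;> fin_cases j <;> simpa using key _ _
    simpa [show (2 * 2 : ℝ) = 4 by norm_num] using h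

theorem det_transfer (m : ℕ) (w : ℂ) : (transfer v ω z m w).det = 1 := by
  induction m generalizing w with
  | zero => simp [transfer]
  | succ m ih => simp [transfer, Matrix.det_mul, ih, oneStep, Matrix.det_fin_two_of]

theorem one_half_le_norm_transfer (m : ℕ) (w : ℂ) : 1 / 2 ≤ ‖transfer v ω z m w‖ := by
  have h := (transfer v ω z m w).norm_det_fin_two_le
  rw [det_transfer, norm_one] at h
  nlinarith [norm_nonneg (transfer v ω z m w)]

theorem norm_transfer_pos (m : ℕ) (w : ℂ) : 0 < ‖transfer v ω z m w‖ :=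
  one_half_pos.trans_le (one_half_le_norm_transfer m w)

theorem transfer_add (m n : ℕ) (w : ℂ) :
    transfer v ω z (m + n) w = transfer v ω z m (w + n * ω) * transfer v ω z n w := by
  induction n generalizing w with
  | zero => simp [transfer]
  | succ n ih =>
    rw [← add_assoc, transfer, ih, transfer, mul_assoc]
    push_cast
    ring_nf

theorem transfer_add_one (hper : ∀ w : ℂ, v (w + 1) = v w) (m : ℕ) (w : ℂ) :
    transfer v ω z m (w + 1) = transfer v ω z m w := by
  induction m generalizing w with
  | zero => rfl
  | succ m ih => rw [transfer, transfer, add_right_comm, ih, oneStep, oneStep, hper]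

theorem continuous_transfer (hvc : Continuous fun θ : ℝ => v θ) (m : ℕ) :
    Continuous fun θ : ℝ => transfer v ω z m θ := by
  induction m with
  | zero => exact continuous_const
  | succ m ih =>
    have hnext : Continuous fun θ : ℝ => transfer v ω z m ((θ : ℂ) + ω) := by
      simpa [Function.comp_def] using ih.comp (continuous_add_const ω)
    refine hnext.matrix_mul (continuous_matrix fun i j => ?_)
    fin_cases i <;> fin_cases j <;> simp [oneStep] <;>
      first | exact continuous_const.sub hvc | exact continuous_const

end Transfer

section Lyapunov

variable {v : ℂ → ℂ} {ω : ℝ} {z : ℂ}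

def logNormIntegral (v : ℂ → ℂ) (ω : ℝ) (z : ℂ) (m : ℕ) : ℝ :=
  ∫ θ in (0 : ℝ)..1, Real.log ‖transfer v ω z m θ‖

theorem neg_log_two_le_log_norm_transfer (m : ℕ) (w : ℂ) :
    -Real.log 2 ≤ Real.log ‖transfer v ω z m w‖ := by
  rw [← Real.log_inv, ← one_div]
  exact Real.log_le_log (by norm_num) (one_half_le_norm_transfer m w)

theorem log_norm_transfer_add_le (m n : ℕ) (w : ℂ) :
    Real.log ‖transfer v ω z (m + n) w‖ ≤
      Real.log ‖transfer v ω z m (w + n * ω)‖ + Real.log ‖transfer v ω z n w‖ := by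
  rw [← Real.log_mul (norm_transfer_pos _ _).ne' (norm_transfer_pos _ _).ne']
  refine Real.log_le_log (norm_transfer_pos _ _) ?_
  rw [transfer_add]
  exact norm_mul_le _ _

theorem continuous_log_norm_transfer (hvc : Continuous fun θ : ℝ => v θ) (m : ℕ) :
    Continuous fun θ : ℝ => Real.log ‖transfer v ω z m θ‖ :=
  (continuous_transfer hvc m).norm.log fun θ => (norm_transfer_pos m θ).ne'

theorem integral_log_norm_transfer_add_const (hper : ∀ w : ℂ, v (w + 1) = v w) (m : ℕ)
    (c : ℝ) :
    ∫ θ in (0 : ℝ)..1, Real.log ‖transfer v ω z m ((θ + c : ℝ) : ℂ)‖ =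
      logNormIntegral v ω z m := by
  have hperiodic : Function.Periodic (fun θ : ℝ => Real.log ‖transfer v ω z m θ‖) 1 :=
    fun θ => by simp only [Complex.ofReal_add, Complex.ofReal_one, transfer_add_one hper]
  rw [intervalIntegral.integral_comp_add_right (fun θ : ℝ => Real.log ‖transfer v ω z m θ‖) c,
    zero_add, add_comm, hperiodic.intervalIntegral_add_eq c 0, zero_add, logNormIntegral]

theorem subadditive_logNormIntegral (hper : ∀ w : ℂ, v (w + 1) = v w)
    (hvc : Continuous fun θ : ℝ => v θ) : Subadditive (logNormIntegral v ω z) := by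
  intro m n
  have hcont (k : ℕ) (c : ℝ) :
      Continuous fun θ : ℝ => Real.log ‖transfer v ω z k ((θ + c : ℝ) : ℂ)‖ :=
    (continuous_log_norm_transfer hvc k).comp (continuous_add_const c)
  calc logNormIntegral v ω z (m + n)
      ≤ ∫ θ in (0 : ℝ)..1, (Real.log ‖transfer v ω z m ((θ + n * ω : ℝ) : ℂ)‖
          + Real.log ‖transfer v ω z n θ‖) := by
        refine intervalIntegral.integral_mono_on zero_le_one
          ((continuous_log_norm_transfer hvc _).intervalIntegrable _ _)
          (((hcont m _).add (continuous_log_norm_transfer hvc n)).intervalIntegrable _ _)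
          fun θ _ => ?_
        simpa using log_norm_transfer_add_le m n (θ : ℂ)
    _ = logNormIntegral v ω z m + logNormIntegral v ω z n := by
        rw [intervalIntegral.integral_add ((hcont m _).intervalIntegrable _ _)
          ((continuous_log_norm_transfer hvc n).intervalIntegrable _ _),
          integral_log_norm_transfer_add_const hper]
        rfl

theorem bddBelow_logNormIntegral_div (hvc : Continuous fun θ : ℝ => v θ) :
    BddBelow (Set.range fun n : ℕ => logNormIntegral v ω z n / n) := by
  refine ⟨-Real.log 2, Set.forall_mem_range.2 fun n => ?_⟩
  have hlog2 : 0 ≤ Real.log 2 := Real.log_nonneg one_le_two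
  have hint : -Real.log 2 ≤ logNormIntegral v ω z n := by
    simpa [logNormIntegral] using intervalIntegral.integral_mono_on (μ := volume) zero_le_one
      (continuous_const.intervalIntegrable _ _)
      ((continuous_log_norm_transfer hvc n).intervalIntegrable _ _)
      fun θ _ => neg_log_two_le_log_norm_transfer (v := v) (ω := ω) (z := z) n θ
  rcases Nat.eq_zero_or_pos n with rfl | hn
  · simpa using hlog2
  · have hn1 : (1 : ℝ) ≤ n := by exact_mod_cast hn
    rw [le_div_iff₀ (by positivity)]
    nlinarith

theorem LyapFS_zero_eq (m : ℕ) : LyapFS v ω z m 0 = logNormIntegral v ω z m / m := by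
  simp [LyapFS, uFun, logNormIntegral, opNorm2_eq_l2_opNorm, div_eq_inv_mul]

theorem Lyap_zero_le_LyapFS (hper : ∀ w : ℂ, v (w + 1) = v w)
    (hvc : Continuous fun θ : ℝ => v θ) {m : ℕ} (hm : m ≠ 0) :
    Lyap v ω z 0 ≤ LyapFS v ω z m 0 := by
  have hsub := subadditive_logNormIntegral (ω := ω) (z := z) hper hvc
  have hbdd := bddBelow_logNormIntegral_div (ω := ω) (z := z) hvc
  have hLyap : Lyap v ω z 0 = hsub.lim := by
    simpa only [Lyap, LyapFS_zero_eq] using (hsub.tendsto_lim hbdd).limsup_eq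
  rw [hLyap, LyapFS_zero_eq]
  exact hsub.lim_le_div hbdd hm

theorem uFun_re_le (hreal : ∀ x : ℝ, (v x).im = 0) (m : ℕ) (θ : ℝ) :
    uFun v ω z.re m θ ≤ Real.log 4 / m + uFun v ω z m θ := by
  have hlog : Real.log ‖transfer v ω z.re m θ‖ ≤ Real.log 4 + Real.log ‖transfer v ω z m θ‖ := by
    rw [← Real.log_mul (by norm_num) (norm_transfer_pos m θ).ne']
    exact Real.log_le_log (norm_transfer_pos m θ) (norm_transfer_re_le hreal m θ)
  simp only [uFun, opNorm2_eq_l2_opNorm, one_div]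
  rw [div_eq_inv_mul, ← mul_add]
  exact mul_le_mul_of_nonneg_left hlog (by positivity)

end Lyapunov

theorem large_deviation_estimate_complex_energy_general
    (ω : ℝ)
    (v : ℂ → ℂ) (hper : ∀ z : ℂ, v (z + 1) = v z)
    (hreal : ∀ x : ℝ, (v (x : ℂ)).im = 0)
    (hanal : ∃ ε₀ > 0, DifferentiableOn ℂ v {z : ℂ | |z.im| < ε₀})
    (E : ℝ)
    (C : ℝ) (hC : 1 < C)
    (hLDT : ∀ δ : ℝ, 0 < δ → δ < 1 / (betaR ω + 1) → ∃ m₀ : ℕ, ∀ m ≥ m₀,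
      volume {θ : ℝ | θ ∈ Set.Ico (0:ℝ) 1 ∧
          |uFun v ω (E : ℂ) m (θ : ℂ) - LyapFS v ω (E : ℂ) m 0|
            > 2 * accel v ω (E : ℂ) * betaR ω + C * δ}
        ≤ ENNReal.ofReal (Real.exp (-(δ ^ 4) * m))) :
    ∀ δ : ℝ, 0 < δ → δ < 1 / (betaR ω + 1) → ∃ m₀ : ℕ, ∀ m ≥ m₀, ∀ η : ℝ,
      |η| ≤ Real.exp (-(2 * m) * (accel v ω (E : ℂ) * betaR ω + 2 * C * δ)) →
      volume {θ : ℝ | θ ∈ Set.Ico (0:ℝ) 1 ∧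
          uFun v ω ((E : ℂ) + (η : ℂ) * Complex.I) m (θ : ℂ)
            < Lyap v ω (E : ℂ) 0 - 2 * accel v ω (E : ℂ) * betaR ω - 2 * C * δ}
        ≤ ENNReal.ofReal (Real.exp (-(δ ^ 4) * m)) := by
  obtain ⟨ε₀, hε₀, hdiff⟩ := hanal
  have hvc : Continuous fun θ : ℝ => v θ :=
    hdiff.continuousOn.comp_continuous Complex.continuous_ofReal fun θ => by simpa using hε₀
  intro δ hδ hδ_lt
  obtain ⟨m₁, hm₁⟩ := hLDT δ hδ hδ_lt
  have hlog4 : ∀ᶠ m : ℕ in atTop, Real.log 4 / m < C * δ :=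
    (tendsto_const_div_atTop_nhds_zero_nat _).eventually
      (gt_mem_nhds (mul_pos (one_pos.trans hC) hδ))
  obtain ⟨m₀, hm₀⟩ := eventually_atTop.1
    (hlog4.and ((eventually_ge_atTop m₁).and (eventually_ne_atTop 0)))
  refine ⟨m₀, fun m hm η _ => (measure_mono ?_).trans (hm₁ m (hm₀ m hm).2.1)⟩
  rintro θ ⟨hθ, hu⟩
  refine ⟨hθ, lt_abs.2 (Or.inr ?_)⟩
  have hre : uFun v ω E m θ ≤ Real.log 4 / m + uFun v ω (E + η * Complex.I) m θ := by
    simpa using uFun_re_le (ω := ω) (z := E + η * Complex.I) hreal m θ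
  have hL := Lyap_zero_le_LyapFS (ω := ω) (z := E) hper hvc (hm₀ m hm).2.2
  linarith [(hm₀ m hm).1]

/-- corollary of the large deviation estimate, for complexified
energies `E + iη` with `|η| ≤ exp(-2m(κβ + 2Cδ))`. -/
theorem large_deviation_estimate_complex_energy
    (ω : ℝ) (hω : ω ∈ Set.Ioo (0:ℝ) 1) (hirr : Irrational ω)
    (v : ℂ → ℂ) (hper : ∀ z : ℂ, v (z + 1) = v z)
    (hreal : ∀ x : ℝ, (v (x : ℂ)).im = 0)
    (hanal : ∃ ε₀ > 0, DifferentiableOn ℂ v {z : ℂ | |z.im| < ε₀})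
    (hβ : betaE ω < ⊤) (E : ℝ)
    (C : ℝ) (hC : 1 < C)
    (hLDT : ∀ δ : ℝ, 0 < δ → δ < 1 / (betaR ω + 1) → ∃ m₀ : ℕ, ∀ m ≥ m₀,
      volume {θ : ℝ | θ ∈ Set.Ico (0:ℝ) 1 ∧
          |uFun v ω (E : ℂ) m (θ : ℂ) - LyapFS v ω (E : ℂ) m 0|
            > 2 * accel v ω (E : ℂ) * betaR ω + C * δ}
        ≤ ENNReal.ofReal (Real.exp (-(δ ^ 4) * m))) :
    ∀ δ : ℝ, 0 < δ → δ < 1 / (betaR ω + 1) → ∃ m₀ : ℕ, ∀ m ≥ m₀, ∀ η : ℝ,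
      |η| ≤ Real.exp (-(2 * m) * (accel v ω (E : ℂ) * betaR ω + 2 * C * δ)) →
      volume {θ : ℝ | θ ∈ Set.Ico (0:ℝ) 1 ∧
          uFun v ω ((E : ℂ) + (η : ℂ) * Complex.I) m (θ : ℂ)
            < Lyap v ω (E : ℂ) 0 - 2 * accel v ω (E : ℂ) * betaR ω - 2 * C * δ}
        ≤ ENNReal.ofReal (Real.exp (-(δ ^ 4) * m)) :=
  large_deviation_estimate_complex_energy_general ω v hper hreal hanal E C hC hLDT

end
end

section
/- Let R > 1, let μ be a finite positive Borel measure on the annulus 𝒜_R that is invariant under the map z ↦ 1/z̄, and let h be continuous on the closed annulus and harmonic on 𝒜_R. Assume the function u(z) := ∫_{𝒜_R} 2π·G_R(z,w) μ(dw) + h(z) satisfies u(z) = u(1/z̄) for all z ∈ 𝒜_R. Then there exists b ∈ ℝ such that ∫_𝕋 h(e^{2πi(θ+iε)}) dθ = b for every ε with |ε| < (log R)/(2π). -/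
open MeasureTheory Filter

noncomputable section

/-!
Green's function of the annulus is invariant under the reflection `z ↦ 1/z̄` applied to both
variables, and so is `μ`; hence the potential `∫ 2π G_R(z, w) dμ(w)` is reflection invariant at
every `z` that is not an atom of `μ`. So `h(1/z̄) = h(z)` off a countable set, hence everywhere by
continuity. In the coordinate `z = e^{2πi(θ + iε)}` the circle mean `A(ε) = ∫₀¹ h dθ` satisfies
`A'' = ∫₀¹ ∂²_ε h dθ = -∫₀¹ ∂²_θ h dθ = 0` by harmonicity and periodicity, so `A` is affine; the
reflection makes `A` even, hence constant.
-/

open ComplexConjugate Topology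

def circleInversion : ℂ ≃ᵐ ℂ where
  toFun z := (conj z)⁻¹
  invFun z := (conj z)⁻¹
  left_inv z := by simp
  right_inv z := by simp
  measurable_toFun := measurable_inv.comp Complex.continuous_conj.measurable
  measurable_invFun := measurable_inv.comp Complex.continuous_conj.measurable

@[simp]
lemma circleInversion_apply (z : ℂ) : circleInversion z = (conj z)⁻¹ := rfl

lemma norm_circleInversion (z : ℂ) : ‖circleInversion z‖ = ‖z‖⁻¹ := by
  simp

lemma continuousAt_circleInversion {z : ℂ} (hz : z ≠ 0) : ContinuousAt circleInversion z :=
  Complex.continuous_conj.continuousAt.inv₀ (by simpa using hz)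

lemma isOpen_annulus (R : ℝ) : IsOpen (annulus R) :=
  isOpen_Ioo.preimage continuous_norm

lemma ne_zero_of_mem_annulus {R : ℝ} {z : ℂ} (hz : z ∈ annulus R) : z ≠ 0 := by
  rintro rfl
  have hR : 0 < R := (norm_nonneg _).trans_lt hz.2
  have : 0 < 1 / R := by positivity
  exact (this.trans hz.1).ne' norm_zero

lemma circleInversion_mem_annulus {R : ℝ} {z : ℂ} (hz : z ∈ annulus R) :
    circleInversion z ∈ annulus R := by
  have hR : 0 < R := (norm_nonneg _).trans_lt hz.2
  have hz0 : 0 < ‖z‖ := norm_pos_iff.2 (ne_zero_of_mem_annulus hz)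
  rw [annulus, Set.mem_ofPred_eq, norm_circleInversion, one_div]
  refine ⟨inv_strictAnti₀ hz0 hz.2, ?_⟩
  simpa using inv_strictAnti₀ (by positivity) hz.1

lemma norm_one_sub_mul_conj {c : ℂ} (hc : conj c = c) (x : ℂ) :
    ‖1 - c * conj x‖ = ‖1 - c * x‖ := by
  rw [← Complex.norm_conj, map_sub, map_one, map_mul, hc, Complex.conj_conj]

lemma conj_ofReal_zpow (R : ℝ) (n : ℤ) : conj ((R : ℂ) ^ n) = (R : ℂ) ^ n := by
  rw [map_zpow₀, Complex.conj_ofReal]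

/-- The infinite products in `Γ_R` are invariant; only the logarithmic term changes. -/
lemma GammaR_circleInversion {R : ℝ} (hR : 1 < R) {z w : ℂ} (hz : z ≠ 0) (hw : w ≠ 0) :
    GammaR R (circleInversion z) (circleInversion w)
      = GammaR R z w + (Real.log ‖z‖ + Real.log ‖w‖) / (2 * Real.pi) := by
  have hnum : ∀ k : ℕ,
      ‖1 - (R : ℂ) ^ (-(4 * ((k : ℤ) + 1))) * circleInversion z / circleInversion w‖
        * ‖1 - (R : ℂ) ^ (-(4 * ((k : ℤ) + 1))) * circleInversion w / circleInversion z‖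
      = ‖1 - (R : ℂ) ^ (-(4 * ((k : ℤ) + 1))) * z / w‖
        * ‖1 - (R : ℂ) ^ (-(4 * ((k : ℤ) + 1))) * w / z‖ := by
    intro k
    have hc := conj_ofReal_zpow R (-(4 * ((k : ℤ) + 1)))
    have swap : ∀ a b : ℂ,
        (R : ℂ) ^ (-(4 * ((k : ℤ) + 1))) * circleInversion a / circleInversion b
          = (R : ℂ) ^ (-(4 * ((k : ℤ) + 1))) * conj (b / a) := by
      intro a b
      simp only [circleInversion_apply, div_eq_mul_inv, inv_inv, map_mul, map_inv₀]
      ring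
    rw [swap, swap, norm_one_sub_mul_conj hc, norm_one_sub_mul_conj hc, mul_comm, mul_div_assoc,
      mul_div_assoc]
  have hden : ∀ k : ℕ,
      ‖1 - (R : ℂ) ^ (-(4 * ((k : ℤ) + 1) - 2)) * circleInversion w * conj (circleInversion z)‖
        * ‖1 - (R : ℂ) ^ (-(4 * ((k : ℤ) + 1) - 2))
            / (conj (circleInversion z) * circleInversion w)‖
      = ‖1 - (R : ℂ) ^ (-(4 * ((k : ℤ) + 1) - 2)) * w * conj z‖
        * ‖1 - (R : ℂ) ^ (-(4 * ((k : ℤ) + 1) - 2)) / (conj z * w)‖ := by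
    intro k
    have hc := conj_ofReal_zpow R (-(4 * ((k : ℤ) + 1) - 2))
    have e1 : (R : ℂ) ^ (-(4 * ((k : ℤ) + 1) - 2)) * circleInversion w * conj (circleInversion z)
        = (R : ℂ) ^ (-(4 * ((k : ℤ) + 1) - 2)) * conj ((conj z * w)⁻¹) := by
      simp only [circleInversion_apply, map_inv₀, map_mul, Complex.conj_conj, mul_inv]
      ring
    have e2 : (R : ℂ) ^ (-(4 * ((k : ℤ) + 1) - 2)) / (conj (circleInversion z) * circleInversion w)
        = (R : ℂ) ^ (-(4 * ((k : ℤ) + 1) - 2)) * conj (w * conj z) := by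
      simp only [circleInversion_apply, map_inv₀, map_mul, Complex.conj_conj, mul_inv, inv_inv,
        div_eq_mul_inv]
      ring
    rw [e1, e2, norm_one_sub_mul_conj hc, norm_one_sub_mul_conj hc, mul_comm, ← mul_assoc,
      ← div_eq_mul_inv]
  have hR0 : R ≠ 0 := by positivity
  have hlogR : Real.log R ≠ 0 := (Real.log_pos hR).ne'
  have hz' : ‖z‖ ≠ 0 := norm_ne_zero_iff.2 hz
  have hw' : ‖w‖ ≠ 0 := norm_ne_zero_iff.2 hw
  rw [GammaR, GammaR, tprod_congr hnum, tprod_congr hden, add_right_comm]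
  congr 1
  rw [norm_circleInversion, norm_circleInversion, Real.log_div (inv_ne_zero hz') hR0,
    Real.log_div (inv_ne_zero hw') hR0, Real.log_inv, Real.log_inv, Real.log_div hz' hR0,
    Real.log_div hw' hR0]
  field_simp
  ring

lemma log_norm_circleInversion_sub {z w : ℂ} (hz : z ≠ 0) (hw : w ≠ 0) (hzw : z ≠ w) :
    Real.log ‖circleInversion z - circleInversion w‖
      = Real.log ‖z - w‖ - Real.log ‖z‖ - Real.log ‖w‖ := by
  have hdiff : circleInversion z - circleInversion w = conj (w - z) / (conj z * conj w) := by
    simp only [circleInversion_apply, map_sub]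
    field_simp [(map_ne_zero _).2 hz, (map_ne_zero _).2 hw]
  rw [hdiff, norm_div, norm_mul, Complex.norm_conj, Complex.norm_conj, Complex.norm_conj,
    norm_sub_rev, Real.log_div (norm_ne_zero_iff.2 (sub_ne_zero.2 hzw))
      (mul_ne_zero (norm_ne_zero_iff.2 hz) (norm_ne_zero_iff.2 hw)),
    Real.log_mul (norm_ne_zero_iff.2 hz) (norm_ne_zero_iff.2 hw)]
  ring

lemma greenR_circleInversion {R : ℝ} (hR : 1 < R) {z w : ℂ} (hz : z ≠ 0) (hw : w ≠ 0)
    (hzw : z ≠ w) :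
    greenR R (circleInversion z) (circleInversion w) = greenR R z w := by
  rw [greenR, greenR, GammaR_circleInversion hR hz hw, log_norm_circleInversion_sub hz hw hzw]
  ring

lemma integral_greenR_circleInversion {R : ℝ} (hR : 1 < R) {μ : Measure ℂ}
    (hinv : μ.map circleInversion = μ) (h0 : μ {0} = 0) {z : ℂ} (hz : z ≠ 0) (hatom : μ {z} = 0) :
    ∫ w, 2 * Real.pi * greenR R (circleInversion z) w ∂μ = ∫ w, 2 * Real.pi * greenR R z w ∂μ := by
  conv_lhs => rw [← hinv, integral_map_equiv]
  refine integral_congr_ae ?_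
  filter_upwards [measure_eq_zero_iff_ae_notMem.1 h0, measure_eq_zero_iff_ae_notMem.1 hatom]
    with w hw hwz
  rw [greenR_circleInversion hR hz hw (Ne.symm hwz)]

lemma countable_setOf_measure_singleton_ne_zero {α : Type*} [MeasurableSpace α]
    [MeasurableSingletonClass α] (μ : Measure α) [SFinite μ] :
    {x : α | μ {x} ≠ 0}.Countable := by
  simpa only [pos_iff_ne_zero] using Measure.countable_meas_pos_of_disjoint_iUnion
    (μ := μ) measurableSet_singleton (fun _ _ hxy => Set.disjoint_singleton.2 hxy)

lemma Set.EqOn.of_eqOn_diff_countable {E Y : Type*} [AddCommGroup E] [Module ℝ E]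
    [Nontrivial E] [TopologicalSpace E] [ContinuousAdd E] [ContinuousSMul ℝ E]
    [TopologicalSpace Y] [T2Space Y] {f g : E → Y} {U C : Set E} (hU : IsOpen U)
    (hC : C.Countable) (hf : ContinuousOn f U) (hg : ContinuousOn g U)
    (hfg : EqOn f g (U \ C)) : EqOn f g U :=
  hfg.of_subset_closure hf hg Set.sdiff_subset ((hC.dense_compl ℝ).open_subset_closure_inter hU)

/-- Off the atoms of `μ` the potential is symmetric under `z ↦ 1/z̄`, so the symmetry of
`potential + h` passes to `h` there, and then everywhere by continuity. -/
lemma eqOn_circleInversion_of_symmetric {R : ℝ} (hR : 1 < R) {μ : Measure ℂ} [SFinite μ]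
    (hsupp : μ (annulus R)ᶜ = 0) (hinv : μ.map circleInversion = μ) {h : ℂ → ℝ}
    (hcont : ContinuousOn h (annulus R))
    (hsym : ∀ z ∈ annulus R,
      (∫ w, 2 * Real.pi * greenR R z w ∂μ) + h z
        = (∫ w, 2 * Real.pi * greenR R (circleInversion z) w ∂μ) + h (circleInversion z)) :
    Set.EqOn (h ∘ circleInversion) h (annulus R) := by
  have h0 : μ {0} = 0 := measure_mono_null
    (Set.singleton_subset_iff.2 fun h0 => ne_zero_of_mem_annulus h0 rfl : {0} ⊆ (annulus R)ᶜ) hsupp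
  refine Set.EqOn.of_eqOn_diff_countable (isOpen_annulus R)
    (countable_setOf_measure_singleton_ne_zero μ) ?_ hcont ?_
  · exact hcont.comp (fun z hz => (continuousAt_circleInversion
      (ne_zero_of_mem_annulus hz)).continuousWithinAt) fun _ => circleInversion_mem_annulus
  · rintro z ⟨hz, hatom⟩
    have := hsym z hz
    rw [integral_greenR_circleInversion hR hinv h0 (ne_zero_of_mem_annulus hz)
      (not_not.1 hatom)] at this
    simp only [Function.comp_apply]
    linarith

lemma hasDerivAt_intervalIntegral_horizontal {J : Set ℝ} (hJ : IsOpen J) {F F' : ℂ → ℝ}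
    (hF : ContinuousOn F (Complex.im ⁻¹' J)) (hF' : ContinuousOn F' (Complex.im ⁻¹' J))
    (hder : ∀ θ : ℝ, ∀ ε ∈ J,
      HasDerivAt (fun s : ℝ => F (θ + s * Complex.I)) (F' (θ + ε * Complex.I)) ε)
    {a b ε₀ : ℝ} (hε₀ : ε₀ ∈ J) :
    HasDerivAt (fun ε : ℝ => ∫ θ in a..b, F (θ + ε * Complex.I))
      (∫ θ in a..b, F' (θ + ε₀ * Complex.I)) ε₀ := by
  have hline : ∀ {ε}, ε ∈ J → ∀ θ : ℝ, (θ : ℂ) + ε * Complex.I ∈ Complex.im ⁻¹' J := by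
    intro ε hε θ; simpa using hε
  have hcont : ∀ {G : ℂ → ℝ}, ContinuousOn G (Complex.im ⁻¹' J) → ∀ {ε}, ε ∈ J →
      Continuous fun θ : ℝ => G (θ + ε * Complex.I) := fun hG _ hε =>
    hG.comp_continuous (by fun_prop) (hline hε)
  obtain ⟨δ, hδ, hball⟩ := Metric.nhds_basis_closedBall.mem_iff.1 (hJ.mem_nhds hε₀)
  obtain ⟨M, hM⟩ : ∃ M, ∀ ζ ∈ (fun p : ℝ × ℝ => (p.1 : ℂ) + p.2 * Complex.I) ''
      (Set.uIcc a b ×ˢ Metric.closedBall ε₀ δ), ‖F' ζ‖ ≤ M :=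
    (isCompact_uIcc.prod (isCompact_closedBall ε₀ δ)).image (by fun_prop)
      |>.exists_bound_of_continuousOn <| hF'.mono <| by
        rintro _ ⟨⟨θ, ε⟩, ⟨-, hε⟩, rfl⟩; exact hline (hball hε) θ
  refine (intervalIntegral.hasDerivAt_integral_of_dominated_loc_of_deriv_le
    (𝕜 := ℝ) (F := fun ε θ => F (θ + ε * Complex.I)) (F' := fun ε θ => F' (θ + ε * Complex.I))
    (bound := fun _ => M) (Metric.closedBall_mem_nhds ε₀ hδ) ?_
    ((hcont hF hε₀).intervalIntegrable _ _) (hcont hF' hε₀).aestronglyMeasurable.restrict ?_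
    intervalIntegrable_const ?_).2
  · filter_upwards [hJ.mem_nhds hε₀] with ε hε
    exact (hcont hF hε).aestronglyMeasurable.restrict
  · exact .of_forall fun θ hθ ε hε =>
      hM _ ⟨(θ, ε), ⟨Set.uIoc_subset_uIcc hθ, hε⟩, rfl⟩
  · exact .of_forall fun θ _ ε hε => hder θ ε (hball hε)

lemma eq_apply_zero_of_even_of_hasDerivAt_hasDerivAt_zero {r : ℝ} {f f' : ℝ → ℝ}
    (hf : ∀ x ∈ Set.Ioo (-r) r, HasDerivAt f (f' x) x)
    (hf' : ∀ x ∈ Set.Ioo (-r) r, HasDerivAt f' 0 x)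
    (heven : ∀ x ∈ Set.Ioo (-r) r, f (-x) = f x) {x : ℝ} (hx : x ∈ Set.Ioo (-r) r) :
    f x = f 0 := by
  have h0 : (0 : ℝ) ∈ Set.Ioo (-r) r := ⟨by linarith [hx.1, hx.2], by linarith [hx.1, hx.2]⟩
  have hconst : ∀ {f g : ℝ → ℝ}, (∀ y ∈ Set.Ioo (-r) r, HasDerivAt f (g y) y) →
      (∀ y ∈ Set.Ioo (-r) r, g y = 0) → ∀ y ∈ Set.Ioo (-r) r, f y = f 0 :=
    fun hf hg y hy => isOpen_Ioo.is_const_of_deriv_eq_zero isPreconnected_Ioo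
      (fun y hy => (hf y hy).differentiableAt.differentiableWithinAt)
      (fun y hy => by rw [(hf y hy).deriv, hg y hy]; rfl) hy h0
  have hslope : f' 0 = 0 := by
    have hf0 : HasDerivAt f (f' 0) (-0) := by rw [neg_zero]; exact hf 0 h0
    have := (hf 0 h0).unique <| (hf0.scomp 0 (hasDerivAt_neg 0)).congr_of_eventuallyEq <|
      Filter.eventually_of_mem (isOpen_Ioo.mem_nhds h0) fun y hy => (heven y hy).symm
    simp only [neg_smul, one_smul] at this
    linarith
  exact hconst hf (fun y hy => (hconst hf' (fun _ _ => rfl) y hy).trans hslope) x hx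

lemma hasDerivAt_ofReal_add_mul_I (θ ε : ℝ) :
    HasDerivAt (fun s : ℝ => (θ : ℂ) + s * Complex.I) Complex.I ε := by
  simpa using ((hasDerivAt_id ε).ofReal_comp.mul_const Complex.I).const_add (θ : ℂ)

lemma hasDerivAt_ofReal_add_const (θ : ℝ) (c : ℂ) :
    HasDerivAt (fun s : ℝ => (s : ℂ) + c) 1 θ := by
  simpa using (hasDerivAt_id θ).ofReal_comp.add_const c

lemma secondDirDeriv_eq_fderiv_fderiv {f : ℂ → ℝ} {x : ℂ} (hf : ContDiffAt ℝ 2 f x) (v : ℂ) :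
    secondDirDeriv f v x = fderiv ℝ (fderiv ℝ f) x v v := by
  have hline : ∀ t : ℝ, HasDerivAt (fun s : ℝ => x + s • v) v t := fun t => by
    simpa using ((hasDerivAt_id t).smul_const v).const_add x
  have hdiff : ∀ᶠ t in 𝓝 (0 : ℝ), DifferentiableAt ℝ f (x + t • v) := by
    refine (hline 0).continuousAt.eventually (f := fun s : ℝ => x + s • v) ?_
    simpa using (hf.eventually (by simp)).mono fun y hy => hy.differentiableAt (by norm_num)
  have hfirst : (deriv fun s : ℝ => f (x + s • v)) =ᶠ[𝓝 0] fun t => fderiv ℝ f (x + t • v) v :=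
    hdiff.mono fun t ht => (ht.hasFDerivAt.comp_hasDerivAt t (hline t)).deriv
  have hsecond : HasDerivAt (fun t : ℝ => fderiv ℝ f (x + t • v) v)
      (fderiv ℝ (fderiv ℝ f) x v v) 0 :=
    (((hf.fderiv_right (m := 1) le_rfl).differentiableAt one_ne_zero).hasFDerivAt
      |>.comp_hasDerivAt_of_eq 0 (hline 0) (by simp)).clm_apply (hasDerivAt_const 0 v)
      |>.congr_deriv (by simp)
  rw [secondDirDeriv, hfirst.deriv_eq, hsecond.deriv]

lemma ContinuousLinearMap.apply_self_add_apply_I_mul_self (B : ℂ →L[ℝ] ℂ →L[ℝ] ℝ) (a : ℂ) :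
    B a a + B (Complex.I * a) (Complex.I * a)
      = ‖a‖ ^ 2 * (B 1 1 + B Complex.I Complex.I) := by
  have expand : ∀ p q : ℝ, B (p • 1 + q • Complex.I) (p • 1 + q • Complex.I)
      = p * p * B 1 1 + p * q * B 1 Complex.I + q * p * B Complex.I 1
        + q * q * B Complex.I Complex.I := by
    intro p q
    simp only [map_add, map_smul, add_apply, smul_apply, smul_eq_mul]
    ring
  have ha : a = a.re • (1 : ℂ) + a.im • Complex.I := by simp [Complex.real_smul, Complex.re_add_im]
  have hIa : Complex.I * a = (-a.im) • (1 : ℂ) + a.re • Complex.I := by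
    apply Complex.ext <;> simp
  rw [hIa, ha, expand, expand, ← Complex.normSq_eq_norm_sq, Complex.normSq_apply]
  simp only [Complex.add_re, Complex.add_im, Complex.smul_re, Complex.smul_im, Complex.one_re,
    Complex.one_im, Complex.I_re, Complex.I_im, smul_eq_mul]
  ring

def expMap (ζ : ℂ) : ℂ := Complex.exp (2 * Real.pi * Complex.I * ζ)

def expStrip (R : ℝ) : Set ℂ :=
  Complex.im ⁻¹' Set.Ioo (-(Real.log R / (2 * Real.pi))) (Real.log R / (2 * Real.pi))

/-- The mean of `h` over the circle `|z| = e^{-2πε}`. -/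
def circleMean (h : ℂ → ℝ) (ε : ℝ) : ℝ :=
  ∫ θ in (0 : ℝ)..1, h (expMap (θ + ε * Complex.I))

lemma continuous_expMap : Continuous expMap := by
  unfold expMap; fun_prop

lemma hasDerivAt_expMap (ζ : ℂ) :
    HasDerivAt expMap (2 * Real.pi * Complex.I * expMap ζ) ζ := by
  refine ((hasDerivAt_id ζ).const_mul (2 * Real.pi * Complex.I)).cexp.congr_deriv ?_
  simp only [id, mul_one, expMap]
  ring

lemma expMap_add_one (ζ : ℂ) : expMap (ζ + 1) = expMap ζ := by
  rw [expMap, expMap, mul_add, Complex.exp_add, mul_one, Complex.exp_two_pi_mul_I, mul_one]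

lemma norm_expMap (ζ : ℂ) : ‖expMap ζ‖ = Real.exp (-(2 * Real.pi * ζ.im)) := by
  simp [expMap, Complex.norm_exp]

lemma expMap_mem_annulus {R : ℝ} (hR : 0 < R) {ζ : ℂ} (hζ : ζ ∈ expStrip R) :
    expMap ζ ∈ annulus R := by
  obtain ⟨hlo, hhi⟩ := hζ
  have h2π : 0 < 2 * Real.pi := by positivity
  rw [lt_div_iff₀ h2π] at hhi
  rw [← neg_div, div_lt_iff₀ h2π] at hlo
  refine ⟨?_, ?_⟩ <;> rw [norm_expMap]
  · rw [one_div, ← Real.exp_log hR, ← Real.exp_neg]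
    exact Real.exp_lt_exp.2 (by linarith)
  · rw [← Real.exp_log hR]
    exact Real.exp_lt_exp.2 (by linarith)

lemma ofReal_add_mul_I_mem_expStrip {R θ ε : ℝ}
    (hε : ε ∈ Set.Ioo (-(Real.log R / (2 * Real.pi))) (Real.log R / (2 * Real.pi))) :
    (θ : ℂ) + ε * Complex.I ∈ expStrip R := by
  simpa [expStrip] using hε

lemma circleInversion_expMap (θ ε : ℝ) :
    circleInversion (expMap (θ + ε * Complex.I)) = expMap (θ + (-ε : ℝ) * Complex.I) := by
  rw [circleInversion_apply, expMap, expMap, ← Complex.exp_conj, ← Complex.exp_neg]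
  congr 1
  simp only [map_mul, map_add, map_ofNat, Complex.conj_ofReal, Complex.conj_I]
  push_cast
  ring

lemma circleMean_neg {R : ℝ} (hR : 0 < R) {h : ℂ → ℝ}
    (hsymm : Set.EqOn (h ∘ circleInversion) h (annulus R)) {ε : ℝ}
    (hε : ε ∈ Set.Ioo (-(Real.log R / (2 * Real.pi))) (Real.log R / (2 * Real.pi))) :
    circleMean h (-ε) = circleMean h ε := by
  refine intervalIntegral.integral_congr fun θ _ => ?_
  rw [← hsymm (expMap_mem_annulus hR (ofReal_add_mul_I_mem_expStrip hε)), Function.comp_apply,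
    circleInversion_expMap]

section ExpDerivatives

variable {h : ℂ → ℝ}

def expMapDir (v ζ : ℂ) : ℂ := 2 * Real.pi * Complex.I * expMap ζ * v

/-- The derivative of `s ↦ h (expMap (γ s))` along any curve `γ` through `ζ` with velocity `v`. -/
def expDeriv (h : ℂ → ℝ) (v ζ : ℂ) : ℝ := fderiv ℝ h (expMap ζ) (expMapDir v ζ)

/-- The second derivative of `s ↦ h (expMap (ζ + s v))`. -/
def expDeriv2 (h : ℂ → ℝ) (v ζ : ℂ) : ℝ :=
  fderiv ℝ (fderiv ℝ h) (expMap ζ) (expMapDir v ζ) (expMapDir v ζ)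
    + fderiv ℝ h (expMap ζ) (2 * Real.pi * Complex.I * expMapDir v ζ * v)

lemma continuous_expMapDir (v : ℂ) : Continuous (expMapDir v) :=
  (continuous_const.mul continuous_expMap).mul continuous_const

lemma expDeriv_add_one (v ζ : ℂ) : expDeriv h v (ζ + 1) = expDeriv h v ζ := by
  simp only [expDeriv, expMapDir, expMap_add_one]

lemma hasDerivAt_comp_expMap {γ : ℝ → ℂ} {v : ℂ} {t : ℝ}
    (hh : DifferentiableAt ℝ h (expMap (γ t))) (hγ : HasDerivAt γ v t) :
    HasDerivAt (fun s => h (expMap (γ s))) (expDeriv h v (γ t)) t :=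
  hh.hasFDerivAt.comp_hasDerivAt t ((hasDerivAt_expMap (γ t)).comp t hγ)

lemma hasDerivAt_expDeriv_comp {γ : ℝ → ℂ} {v : ℂ} {t : ℝ}
    (hh : DifferentiableAt ℝ (fderiv ℝ h) (expMap (γ t))) (hγ : HasDerivAt γ v t) :
    HasDerivAt (fun s => expDeriv h v (γ s)) (expDeriv2 h v (γ t)) t := by
  have hexp := (hasDerivAt_expMap (γ t)).comp t hγ
  have hdir : HasDerivAt (fun s => expMapDir v (γ s))
      (2 * Real.pi * Complex.I * expMapDir v (γ t) * v) t :=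
    ((hexp.const_mul (2 * Real.pi * Complex.I)).mul_const v).congr_deriv (by simp only [expMapDir])
  have hD : HasDerivAt (fun s => fderiv ℝ h (expMap (γ s)))
      (fderiv ℝ (fderiv ℝ h) (expMap (γ t)) (expMapDir v (γ t))) t :=
    hh.hasFDerivAt.comp_hasDerivAt t hexp
  exact hD.clm_apply hdir

/-- `expMap` is conformal, so `h ∘ expMap` is harmonic where `h` is. -/
lemma expDeriv2_one_add_expDeriv2_I {ζ : ℂ} (hh : ContDiffAt ℝ 2 h (expMap ζ))
    (hΔ : secondDirDeriv h 1 (expMap ζ) + secondDirDeriv h Complex.I (expMap ζ) = 0) :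
    expDeriv2 h 1 ζ + expDeriv2 h Complex.I ζ = 0 := by
  rw [secondDirDeriv_eq_fderiv_fderiv hh, secondDirDeriv_eq_fderiv_fderiv hh] at hΔ
  have hB := (fderiv ℝ (fderiv ℝ h) (expMap ζ)).apply_self_add_apply_I_mul_self (expMapDir 1 ζ)
  rw [hΔ, mul_zero] at hB
  have hdir : expMapDir Complex.I ζ = Complex.I * expMapDir 1 ζ := by
    simp only [expMapDir]; ring
  have hfirst : 2 * Real.pi * Complex.I * (Complex.I * expMapDir 1 ζ) * Complex.I
      = -(2 * Real.pi * Complex.I * expMapDir 1 ζ * 1) := by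
    linear_combination (2 * Real.pi * Complex.I * expMapDir 1 ζ) * Complex.I_sq
  simp only [expDeriv2, hdir, hfirst, map_neg]
  linarith

variable {R : ℝ}

lemma contDiffAt_of_mem_expStrip (hR : 0 < R) (hh : ContDiffOn ℝ 2 h (annulus R)) {ζ : ℂ}
    (hζ : ζ ∈ expStrip R) : ContDiffAt ℝ 2 h (expMap ζ) :=
  hh.contDiffAt ((isOpen_annulus R).mem_nhds (expMap_mem_annulus hR hζ))

lemma continuousOn_expDeriv (hR : 0 < R) (hh : ContDiffOn ℝ 2 h (annulus R)) (v : ℂ) :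
    ContinuousOn (expDeriv h v) (expStrip R) := by
  have hmaps : Set.MapsTo expMap (expStrip R) (annulus R) := fun _ => expMap_mem_annulus hR
  exact ((hh.continuousOn_fderiv_of_isOpen (isOpen_annulus R) one_le_two).comp
    continuous_expMap.continuousOn hmaps).clm_apply (continuous_expMapDir v).continuousOn

lemma continuousOn_expDeriv2 (hR : 0 < R) (hh : ContDiffOn ℝ 2 h (annulus R)) (v : ℂ) :
    ContinuousOn (expDeriv2 h v) (expStrip R) := by
  have hmaps : Set.MapsTo expMap (expStrip R) (annulus R) := fun _ => expMap_mem_annulus hR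
  have hdir := continuous_expMapDir v
  have hD := (hh.continuousOn_fderiv_of_isOpen (isOpen_annulus R) one_le_two).comp
    continuous_expMap.continuousOn hmaps
  have hD2 := ((hh.fderiv_of_isOpen (isOpen_annulus R) (m := 1) le_rfl)
    |>.continuousOn_fderiv_of_isOpen (isOpen_annulus R) le_rfl).comp
      continuous_expMap.continuousOn hmaps
  exact ((hD2.clm_apply hdir.continuousOn).clm_apply hdir.continuousOn).add
    (hD.clm_apply ((continuous_const.mul hdir).mul continuous_const).continuousOn)

end ExpDerivatives

section CircleMean

variable {R : ℝ} {h : ℂ → ℝ}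

lemma hasDerivAt_circleMean (hR : 0 < R) (hh : ContDiffOn ℝ 2 h (annulus R)) {ε : ℝ}
    (hε : ε ∈ Set.Ioo (-(Real.log R / (2 * Real.pi))) (Real.log R / (2 * Real.pi))) :
    HasDerivAt (circleMean h) (∫ θ in (0 : ℝ)..1, expDeriv h Complex.I (θ + ε * Complex.I)) ε :=
  hasDerivAt_intervalIntegral_horizontal isOpen_Ioo
    (hh.continuousOn.comp continuous_expMap.continuousOn fun _ => expMap_mem_annulus hR)
    (continuousOn_expDeriv hR hh Complex.I)
    (fun θ _ hε => hasDerivAt_comp_expMap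
      ((contDiffAt_of_mem_expStrip hR hh (ofReal_add_mul_I_mem_expStrip hε)).differentiableAt
        two_ne_zero) (hasDerivAt_ofReal_add_mul_I θ _)) hε

/-- The flux of `h` through a circle does not depend on the radius: by harmonicity the
`ε`-derivative is minus the integral of a `θ`-derivative of a `1`-periodic function. -/
lemma hasDerivAt_integral_expDeriv_I (hR : 0 < R) (hh : HarmonicOnSet h (annulus R)) {ε : ℝ}
    (hε : ε ∈ Set.Ioo (-(Real.log R / (2 * Real.pi))) (Real.log R / (2 * Real.pi))) :
    HasDerivAt (fun ε : ℝ => ∫ θ in (0 : ℝ)..1, expDeriv h Complex.I (θ + ε * Complex.I)) 0 ε := by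
  have hC2 : ∀ {ζ}, ζ ∈ expStrip R → ContDiffAt ℝ 2 h (expMap ζ) :=
    contDiffAt_of_mem_expStrip hR hh.1
  have hD2 : ∀ {ζ}, ζ ∈ expStrip R → DifferentiableAt ℝ (fderiv ℝ h) (expMap ζ) := fun hζ =>
    ((hC2 hζ).fderiv_right (m := 1) le_rfl).differentiableAt one_ne_zero
  have hderiv := hasDerivAt_intervalIntegral_horizontal isOpen_Ioo
    (continuousOn_expDeriv hR hh.1 Complex.I) (continuousOn_expDeriv2 hR hh.1 Complex.I)
    (fun θ _ hε => hasDerivAt_expDeriv_comp (hD2 (ofReal_add_mul_I_mem_expStrip hε))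
      (hasDerivAt_ofReal_add_mul_I θ _)) hε (a := 0) (b := 1)
  have hharm : ∀ θ : ℝ, expDeriv2 h Complex.I (θ + ε * Complex.I)
      = -expDeriv2 h 1 (θ + ε * Complex.I) := fun θ => by
    have hζ := ofReal_add_mul_I_mem_expStrip (θ := θ) hε
    linarith [expDeriv2_one_add_expDeriv2_I (hC2 hζ) (hh.2 _ (expMap_mem_annulus hR hζ))]
  have hint : IntervalIntegrable (fun θ : ℝ => expDeriv2 h 1 (θ + ε * Complex.I)) volume 0 1 :=
    ((continuousOn_expDeriv2 hR hh.1 1).comp_continuous (by fun_prop)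
      fun _ => ofReal_add_mul_I_mem_expStrip hε).intervalIntegrable _ _
  have hflux : ∫ θ in (0 : ℝ)..1, expDeriv2 h 1 (θ + ε * Complex.I)
      = expDeriv h 1 ((1 : ℝ) + ε * Complex.I) - expDeriv h 1 ((0 : ℝ) + ε * Complex.I) :=
    intervalIntegral.integral_eq_sub_of_hasDerivAt
      (fun θ _ => hasDerivAt_expDeriv_comp (hD2 (ofReal_add_mul_I_mem_expStrip hε))
        (hasDerivAt_ofReal_add_const θ _)) hint
  have hperiod :
      expDeriv h 1 ((1 : ℝ) + ε * Complex.I) = expDeriv h 1 ((0 : ℝ) + ε * Complex.I) := by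
    rw [show ((1 : ℝ) : ℂ) + ε * Complex.I = ((0 : ℝ) : ℂ) + ε * Complex.I + 1 by push_cast; ring,
      expDeriv_add_one]
  simpa only [hharm, intervalIntegral.integral_neg, hflux, hperiod, sub_self, neg_zero]
    using hderiv

theorem circleMean_eq_circleMean_zero (hR : 0 < R) (hh : HarmonicOnSet h (annulus R))
    (hsymm : Set.EqOn (h ∘ circleInversion) h (annulus R)) {ε : ℝ}
    (hε : |ε| < Real.log R / (2 * Real.pi)) :
    circleMean h ε = circleMean h 0 :=
  eq_apply_zero_of_even_of_hasDerivAt_hasDerivAt_zero (fun _ hx => hasDerivAt_circleMean hR hh.1 hx)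
    (fun _ hx => hasDerivAt_integral_expDeriv_I hR hh hx) (fun _ hx => circleMean_neg hR hsymm hx)
    (abs_lt.1 hε)

end CircleMean

theorem harmonic_part_circle_average_constant_general
    (R : ℝ) (hR : 1 < R)
    (μ : Measure ℂ) (hfin : IsFiniteMeasure μ)
    (hsupp : μ (annulus R)ᶜ = 0)
    (hinv : Measure.map (fun z : ℂ => ((starRingEnd ℂ) z)⁻¹) μ = μ)
    (h : ℂ → ℝ)
    (hharm : HarmonicOnSet h (annulus R))
    (hsym : ∀ z ∈ annulus R,
      (∫ w, 2 * Real.pi * greenR R z w ∂μ) + h z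
        = (∫ w, 2 * Real.pi * greenR R ((starRingEnd ℂ) z)⁻¹ w ∂μ)
          + h ((starRingEnd ℂ) z)⁻¹) :
    ∃ b : ℝ, ∀ ε : ℝ, |ε| < Real.log R / (2 * Real.pi) →
      (∫ θ in (0:ℝ)..1,
          h (Complex.exp (2 * Real.pi * Complex.I * ((θ : ℂ) + (ε : ℂ) * Complex.I)))) = b := by
  have hsymm : Set.EqOn (h ∘ circleInversion) h (annulus R) :=
    eqOn_circleInversion_of_symmetric hR hsupp hinv hharm.1.continuousOn hsym
  exact ⟨circleMean h 0, fun ε hε =>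
    circleMean_eq_circleMean_zero (zero_lt_one.trans hR) hharm hsymm hε⟩

/-- the circle averages of the harmonic part are constant. -/
theorem harmonic_part_circle_average_constant
    (R : ℝ) (hR : 1 < R)
    (μ : Measure ℂ) (hfin : IsFiniteMeasure μ)
    (hsupp : μ (annulus R)ᶜ = 0)
    (hinv : Measure.map (fun z : ℂ => ((starRingEnd ℂ) z)⁻¹) μ = μ)
    (h : ℂ → ℝ)
    (hcont : ContinuousOn h (closedAnnulus R))
    (hharm : HarmonicOnSet h (annulus R))
    (hsym : ∀ z ∈ annulus R,
      (∫ w, 2 * Real.pi * greenR R z w ∂μ) + h z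
        = (∫ w, 2 * Real.pi * greenR R ((starRingEnd ℂ) z)⁻¹ w ∂μ)
          + h ((starRingEnd ℂ) z)⁻¹) :
    ∃ b : ℝ, ∀ ε : ℝ, |ε| < Real.log R / (2 * Real.pi) →
      (∫ θ in (0:ℝ)..1,
          h (Complex.exp (2 * Real.pi * Complex.I * ((θ : ℂ) + (ε : ℂ) * Complex.I)))) = b :=
  harmonic_part_circle_average_constant_general R hR μ hfin hsupp hinv h hharm hsym

end
end

section
/- Let k ∈ ℤ \ {0}, let r > 0 with r ≠ 1, let φ ∈ ℝ, and set w = r·e^{2πiφ}. Then ∫₀¹ log|e^{2πiθ} − w|·e^{−2πikθ} dθ = −(e^{−2πikφ}/(2|k|))·r^{|k|} if r < 1, and ∫₀¹ log|e^{2πiθ} − w|·e^{−2πikθ} dθ = −(e^{−2πikφ}/(2|k|))·r^{−|k|} if r > 1. -/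
open MeasureTheory Filter

noncomputable section

/-! For `|s| < 1`, `log ‖e(x) - s‖ = Re log (1 - s e(-x))`, and the Taylor series of `log (1 - z)`
together with its conjugate turn this into the absolutely convergent Fourier series
`∑_{m ≠ 0} -(s ^ |m| / (2|m|)) e(m x)`, whose coefficients can be read off term by term; rotating by
`e(φ)` multiplies the `m`-th coefficient by `e(-mφ)`. For `|s| > 1` the identity
`‖u - s v‖ = |s| ‖u - s⁻¹ v‖` on the unit circle reduces to the first case, the constant `log |s|`
contributing only to the zeroth coefficient. Here `e(x) = exp (2πix)`. -/

open Complex ComplexConjugate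
open scoped Real

theorem norm_exp_two_pi_I_mul (x : ℝ) : ‖exp (2 * π * I * x)‖ = 1 := by
  simp [norm_exp]

theorem integral_exp_two_pi_I_int_mul (m : ℤ) :
    ∫ θ in (0:ℝ)..1, exp (2 * π * I * m * θ) = if m = 0 then 1 else 0 := by
  split_ifs with hm
  · simp [hm]
  · have hne : 2 * π * I * m ≠ 0 := by simp [Real.pi_ne_zero, I_ne_zero, hm]
    have hper : exp (2 * π * I * m) = 1 := by
      simpa [mul_comm, mul_assoc, mul_left_comm] using exp_int_mul_two_pi_mul_I m
    simp [integral_exp_mul_complex hne, hper]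

theorem integral_mul_exp_neg_of_hasSum {c : ℤ → ℂ} (hc : Summable fun m => ‖c m‖) {f : ℝ → ℂ}
    (hf : ∀ θ : ℝ, HasSum (fun m => c m * exp (2 * π * I * m * θ)) (f θ)) (k : ℤ) :
    ∫ θ in (0:ℝ)..1, f θ * exp (-2 * π * I * k * θ) = c k := by
  have hterm (m : ℤ) : ∫ θ in (0:ℝ)..1, c m * exp (2 * π * I * m * θ) * exp (-2 * π * I * k * θ)
      = if m = k then c k else 0 := by
    have hexp (θ : ℝ) : c m * exp (2 * π * I * m * θ) * exp (-2 * π * I * k * θ)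
        = c m * exp (2 * π * I * (m - k : ℤ) * θ) := by
      rw [mul_assoc, ← exp_add]; push_cast; ring_nf
    simp_rw [hexp, intervalIntegral.integral_const_mul, integral_exp_two_pi_I_int_mul, sub_eq_zero]
    split_ifs with h <;> simp [h]
  have hsum := intervalIntegral.hasSum_integral_of_dominated_convergence (μ := volume)
    (F := fun m θ => c m * exp (2 * π * I * m * θ) * exp (-2 * π * I * k * θ))
    (f := fun θ => f θ * exp (-2 * π * I * k * θ)) (a := 0) (b := 1) (fun m _ => ‖c m‖)
    (fun m => (by fun_prop : Continuous _).aestronglyMeasurable)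
    (fun m => .of_forall fun θ _ => by simp [norm_exp])
    (.of_forall fun _ _ => hc) intervalIntegrable_const
    (.of_forall fun θ _ => (hf θ).mul_right _)
  refine hsum.unique ?_
  simp_rw [hterm]
  exact hasSum_ite_eq k (c k)

theorem summable_pow_natAbs {ρ : ℝ} (h₀ : 0 ≤ ρ) (h₁ : ρ < 1) :
    Summable fun m : ℤ => ρ ^ m.natAbs :=
  .of_nat_of_neg (by simpa using summable_geometric_of_lt_one h₀ h₁)
    (by simpa using summable_geometric_of_lt_one h₀ h₁)

theorem norm_sub_ofReal_mul_eq_abs_mul_norm_sub {u v : ℂ} (hu : ‖u‖ = 1) (hv : ‖v‖ = 1) {r : ℝ}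
    (hr : r ≠ 0) : ‖u - r * v‖ = |r| * ‖u - r⁻¹ * v‖ := by
  have hu' : u * conj u = 1 := by simp [mul_conj', hu]
  have hv' : v * conj v = 1 := by simp [mul_conj', hv]
  have hr' : (r : ℂ) * (r : ℂ)⁻¹ = 1 := mul_inv_cancel₀ (ofReal_ne_zero.mpr hr)
  have hfac : u - r * v = -(r * u * v) * conj (u - r⁻¹ * v) := by
    simp only [map_sub, map_mul, ofReal_inv, map_inv₀, conj_ofReal]
    linear_combination (r * v) * hu' - u * v * conj v * hr' - u * hv'
  rw [hfac, norm_mul, norm_conj]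
  simp [hu, hv]

theorem exp_two_pi_I_mul_sub_ofReal_mul_ne_zero {s : ℝ} (hs : |s| ≠ 1) (θ φ : ℝ) :
    exp (2 * π * I * θ) - s * exp (2 * π * I * φ) ≠ 0 := fun h =>
  hs (by simpa [norm_exp] using (congrArg norm (sub_eq_zero.mp h)).symm)

theorem hasSum_log_norm_exp_sub {s : ℝ} (hs : |s| < 1) (x : ℝ) :
    HasSum (fun m : ℤ => -((s : ℂ) ^ m.natAbs / (2 * m.natAbs)) * exp (2 * π * I * m * x))
      (Real.log ‖exp (2 * π * I * x) - s‖) := by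
  set f : ℤ → ℂ := fun m => -((s : ℂ) ^ m.natAbs / (2 * m.natAbs)) * exp (2 * π * I * m * x)
  set z : ℂ := s * exp (-(2 * π * I * x))
  have hz : ‖z‖ < 1 := by simpa [z, norm_exp] using hs
  have hnorm : ‖exp (2 * π * I * x) - s‖ = ‖1 - z‖ := by
    rw [show 1 - z = exp (-(2 * π * I * x)) * (exp (2 * π * I * x) - s) by
      rw [mul_sub, ← exp_add, neg_add_cancel, exp_zero]; ring, norm_mul]
    simp [norm_exp]
  have hL := hasSum_taylorSeries_neg_log hz
  have hpow (n : ℕ) : z ^ n = (s : ℂ) ^ n * exp (-(2 * π * I * n * x)) := by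
    rw [mul_pow, ← exp_nat_mul]; ring_nf
  have hneg : HasSum (fun n : ℕ => f (-n)) (-1 / 2 * -log (1 - z)) := by
    have hterm (n : ℕ) : f (-n) = -1 / 2 * (z ^ n / n) := by
      simp only [f, hpow, Int.natAbs_neg, Int.natAbs_natCast, Int.cast_neg, Int.cast_natCast]
      ring_nf
    simpa only [hterm] using hL.mul_left (-1 / 2)
  have hpos : HasSum (fun n : ℕ => f n) (-1 / 2 * conj (-log (1 - z))) := by
    have hterm (n : ℕ) : f n = -1 / 2 * conj (z ^ n / n) := by
      simp only [f, map_div₀, map_pow, hpow, map_mul, conj_ofReal, ← exp_conj, map_natCast, conj_I,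
        map_ofNat, map_neg, Int.natAbs_natCast, Int.cast_natCast]
      ring_nf
    simpa only [hterm] using (hasSum_conj'.mpr hL).mul_left (-1 / 2)
  -- the `m = 0` coefficient is `-(1 / 0) = 0`
  have hf0 : f 0 = 0 := by simp [f]
  have hval : (Real.log ‖exp (2 * π * I * x) - s‖ : ℂ)
      = -1 / 2 * conj (-log (1 - z)) + -1 / 2 * -log (1 - z) - f 0 := by
    rw [hnorm, hf0, map_neg, ← log_re, re_eq_add_conj]; ring
  rw [hval]
  exact hpos.of_nat_of_neg hneg

theorem integral_log_norm_exp_sub_mul_exp {s : ℝ} (hs : |s| < 1) (φ : ℝ) (k : ℤ) :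
    ∫ θ in (0:ℝ)..1, (Real.log ‖exp (2 * π * I * θ) - s * exp (2 * π * I * φ)‖ : ℂ)
        * exp (-2 * π * I * k * θ)
      = -(exp (-2 * π * I * k * φ) / (2 * k.natAbs)) * (s : ℂ) ^ k.natAbs := by
  refine integral_mul_exp_neg_of_hasSum (c := fun m => -(exp (-2 * π * I * m * φ) / (2 * m.natAbs))
    * (s : ℂ) ^ m.natAbs) ?_ (fun θ => ?_) k
  · refine (summable_pow_natAbs (abs_nonneg s) hs).of_nonneg_of_le (fun _ => norm_nonneg _)
      fun m => ?_
    rcases eq_or_ne m 0 with rfl | hm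
    · simp
    · have hn : (1 : ℝ) ≤ m.natAbs := mod_cast Int.natAbs_pos.mpr hm
      calc ‖_‖ = |s| ^ m.natAbs / (2 * m.natAbs) := by simp [norm_exp, div_eq_mul_inv, mul_comm]
        _ ≤ |s| ^ m.natAbs := div_le_self (by positivity) (by linarith)
  · have hrot : exp (2 * π * I * θ) - s * exp (2 * π * I * φ)
        = exp (2 * π * I * φ) * (exp (2 * π * I * (θ - φ : ℝ)) - s) := by
      push_cast; rw [mul_sub, ← exp_add]; ring_nf
    have hterm (m : ℤ) : -((s : ℂ) ^ m.natAbs / (2 * m.natAbs)) * exp (2 * π * I * m * (θ - φ : ℝ))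
        = -(exp (-2 * π * I * m * φ) / (2 * m.natAbs)) * (s : ℂ) ^ m.natAbs
          * exp (2 * π * I * m * θ) := by
      push_cast
      rw [show 2 * π * I * m * (θ - φ) = -2 * π * I * m * φ + 2 * π * I * m * θ by ring, exp_add]
      ring
    rw [hrot, norm_mul, norm_exp_two_pi_I_mul, one_mul]
    convert hasSum_log_norm_exp_sub hs (θ - φ) using 2 with m
    exact (hterm m).symm

theorem integral_log_norm_exp_sub_mul_exp_of_one_lt_abs {s : ℝ} (hs : 1 < |s|) (φ : ℝ) {k : ℤ}
    (hk : k ≠ 0) :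
    ∫ θ in (0:ℝ)..1, (Real.log ‖exp (2 * π * I * θ) - s * exp (2 * π * I * φ)‖ : ℂ)
        * exp (-2 * π * I * k * θ)
      = -(exp (-2 * π * I * k * φ) / (2 * k.natAbs)) * (s : ℂ) ^ (-(k.natAbs : ℤ)) := by
  have hs₀ : s ≠ 0 := abs_pos.mp (one_pos.trans hs)
  have hs' : |s⁻¹| < 1 := by rw [abs_inv]; exact inv_lt_one_of_one_lt₀ hs
  have hne (θ : ℝ) := norm_ne_zero_iff.mpr (exp_two_pi_I_mul_sub_ofReal_mul_ne_zero hs'.ne θ φ)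
  have hsplit (θ : ℝ) : (Real.log ‖exp (2 * π * I * θ) - s * exp (2 * π * I * φ)‖ : ℂ)
        * exp (-2 * π * I * k * θ)
      = Real.log |s| * exp (-2 * π * I * k * θ)
        + (Real.log ‖exp (2 * π * I * θ) - s⁻¹ * exp (2 * π * I * φ)‖ : ℂ)
          * exp (-2 * π * I * k * θ) := by
    rw [norm_sub_ofReal_mul_eq_abs_mul_norm_sub (norm_exp_two_pi_I_mul θ) (norm_exp_two_pi_I_mul φ)
      hs₀, Real.log_mul (abs_ne_zero.mpr hs₀) (hne θ)]
    push_cast; ring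
  have hcont : Continuous fun θ : ℝ =>
      (Real.log ‖exp (2 * π * I * θ) - s⁻¹ * exp (2 * π * I * φ)‖ : ℂ) * exp (-2 * π * I * k * θ) :=
    (continuous_ofReal.comp ((by fun_prop : Continuous _).norm.log hne)).mul (by fun_prop)
  have horth : ∫ θ in (0:ℝ)..1, exp (-2 * π * I * k * θ) = 0 := by
    simpa [hk, neg_mul, mul_neg] using integral_exp_two_pi_I_int_mul (-k)
  rw [intervalIntegral.integral_congr fun θ _ => hsplit θ,
    intervalIntegral.integral_add ((by fun_prop : Continuous _).intervalIntegrable _ _)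
      (hcont.intervalIntegrable _ _),
    intervalIntegral.integral_const_mul, horth, mul_zero, zero_add,
    integral_log_norm_exp_sub_mul_exp hs' φ k, ofReal_inv, inv_pow, zpow_neg, zpow_natCast]

theorem fourier_coefficient_of_log_distance_general
    (k : ℤ) (hk : k ≠ 0) (r : ℝ) (hr : 0 < r) (φ : ℝ) (w : ℂ)
    (hw : w = (r : ℂ) * Complex.exp (2 * Real.pi * Complex.I * (φ : ℂ))) :
    (r < 1 →
      (∫ θ in (0:ℝ)..1,
          ((Real.log (‖Complex.exp (2 * Real.pi * Complex.I * (θ : ℂ)) - w‖) : ℂ)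
            * Complex.exp (-2 * Real.pi * Complex.I * (k : ℂ) * (θ : ℂ))))
        = -(Complex.exp (-2 * Real.pi * Complex.I * (k : ℂ) * (φ : ℂ)) / (2 * (k.natAbs : ℂ)))
            * (r : ℂ) ^ (k.natAbs : ℕ)) ∧
    (1 < r →
      (∫ θ in (0:ℝ)..1,
          ((Real.log (‖Complex.exp (2 * Real.pi * Complex.I * (θ : ℂ)) - w‖) : ℂ)
            * Complex.exp (-2 * Real.pi * Complex.I * (k : ℂ) * (θ : ℂ))))
        = -(Complex.exp (-2 * Real.pi * Complex.I * (k : ℂ) * (φ : ℂ)) / (2 * (k.natAbs : ℂ)))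
            * (r : ℂ) ^ (-(k.natAbs : ℤ))) := by
  subst hw
  exact ⟨fun hlt => integral_log_norm_exp_sub_mul_exp (by rwa [abs_of_pos hr]) φ k,
    fun hgt => integral_log_norm_exp_sub_mul_exp_of_one_lt_abs (by rwa [abs_of_pos hr]) φ hk⟩

/-- Fourier coefficients of `θ ↦ log|e^{2πiθ} - w|` for `w = r·e^{2πiφ}`. -/
theorem fourier_coefficient_of_log_distance
    (k : ℤ) (hk : k ≠ 0) (r : ℝ) (hr : 0 < r) (hr1 : r ≠ 1) (φ : ℝ) (w : ℂ)
    (hw : w = (r : ℂ) * Complex.exp (2 * Real.pi * Complex.I * (φ : ℂ))) :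
    (r < 1 →
      (∫ θ in (0:ℝ)..1,
          ((Real.log (‖Complex.exp (2 * Real.pi * Complex.I * (θ : ℂ)) - w‖) : ℂ)
            * Complex.exp (-2 * Real.pi * Complex.I * (k : ℂ) * (θ : ℂ))))
        = -(Complex.exp (-2 * Real.pi * Complex.I * (k : ℂ) * (φ : ℂ)) / (2 * (k.natAbs : ℂ)))
            * (r : ℂ) ^ (k.natAbs : ℕ)) ∧
    (1 < r →
      (∫ θ in (0:ℝ)..1,
          ((Real.log (‖Complex.exp (2 * Real.pi * Complex.I * (θ : ℂ)) - w‖) : ℂ)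
            * Complex.exp (-2 * Real.pi * Complex.I * (k : ℂ) * (θ : ℂ))))
        = -(Complex.exp (-2 * Real.pi * Complex.I * (k : ℂ) * (φ : ℂ)) / (2 * (k.natAbs : ℂ)))
            * (r : ℂ) ^ (-(k.natAbs : ℤ))) :=
  fourier_coefficient_of_log_distance_general k hk r hr φ w hw

end
end

section
/- Let ω ∈ (0,1) be irrational, let n ≥ 1, and let ℓ be an integer with 1 ≤ ℓ ≤ a_{n+1}/4. Then: (i) for every integer k with ℓ·q_n < k < (ℓ+1)·q_n, one has ‖k·ω‖ ≥ (3/4)·‖q_{n−1}·ω‖; and (ii) for every real Q > 0, Σ_{k ∈ ℤ, ℓ·q_n < k < (ℓ+1)·q_n} 1/(1 + Q²·‖k·ω‖²) ≤ 4π·q_n/Q. -/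
/-!
Write `δ = ‖q_{n-1} ω‖`. For `ℓ q_n < k < (ℓ + 1) q_n` split `k = ℓ q_n + r` with
`0 < r < q_n`: the best approximation property of the convergents gives `‖r ω‖ ≥ δ`, while
`‖ℓ q_n ω‖ ≤ ℓ ‖q_n ω‖ ≤ a_{n+1} ‖q_n ω‖ / 4 ≤ δ / 4`, whence (i).
Differences of two such `k` also lie strictly between `-q_n` and `q_n`, so the points
`k ω - round (k ω)` are `δ`-separated: at most `2 t / δ + 1` of them lie in `[-t, t]`, and
with (i) the `j`-th smallest value of `‖k ω‖` is at least `j δ / 4`. Comparing the sum with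
`∫₀^∞ dx / (1 + (Q δ x / 4)²) = 2 π / (Q δ)` and using `2 q_n δ ≥ 1` gives (ii).
-/

open MeasureTheory Filter

noncomputable section

open Finset Real

theorem card_le_div_add_one_of_separated {ι : Type*} {s : Finset ι} {x : ι → ℝ} {δ L U : ℝ}
    (hδ : 0 < δ) (hLU : L ≤ U) (hx : ∀ k ∈ s, x k ∈ Set.Icc L U)
    (hsep : ∀ a ∈ s, ∀ b ∈ s, a ≠ b → δ ≤ |x a - x b|) :
    (#s : ℝ) ≤ (U - L) / δ + 1 := by
  classical
  induction s using Finset.induction_on_max_value x generalizing U with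
  | empty =>
    simp only [card_empty, CharP.cast_eq_zero]
    positivity
  | insert a s has hmax ih =>
    rw [card_insert_of_notMem has, Nat.cast_succ, add_le_add_iff_right]
    rcases s.eq_empty_or_nonempty with rfl | ⟨k, hk⟩
    · simp only [card_empty, CharP.cast_eq_zero]
      exact div_nonneg (by linarith) hδ.le
    have hbelow : ∀ b ∈ s, x b ≤ x a - δ := fun b hb => by
      have := hsep a (mem_insert_self a s) b (mem_insert_of_mem hb) (by rintro rfl; exact has hb)
      rw [abs_of_nonneg (sub_nonneg.2 (hmax b hb))] at this
      linarith
    have hL : L ≤ x a - δ := (hx k (mem_insert_of_mem hk)).1.trans (hbelow k hk)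
    calc (#s : ℝ) ≤ (x a - δ - L) / δ + 1 :=
          ih hL (fun b hb => ⟨(hx b (mem_insert_of_mem hb)).1, hbelow b hb⟩)
            (fun b hb c hc => hsep b (mem_insert_of_mem hb) c (mem_insert_of_mem hc))
      _ = (x a - L) / δ := by field_simp; ring
      _ ≤ (U - L) / δ := by gcongr; exact (hx a (mem_insert_self a s)).2

theorem sum_le_sum_range_of_mul_card_le {ι : Type*} [DecidableEq ι] {s : Finset ι}
    {w : ι → ℝ} {F : ℝ → ℝ} {c : ℝ} (hc : 0 ≤ c) (hF : AntitoneOn F (Set.Ici 0))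
    (hw : ∀ k ∈ s, c * #{k' ∈ s | w k' ≤ w k} ≤ w k) :
    ∑ k ∈ s, F (w k) ≤ ∑ i ∈ range #s, F (c * (i + 1)) := by
  induction s using Finset.induction_on_max_value w with
  | empty => simp
  | insert a s has hmax ih =>
    have hall : #{k' ∈ insert a s | w k' ≤ w a} = #s + 1 := by
      rw [filter_true_of_mem, card_insert_of_notMem has]
      simpa using hmax
    have ha := hw a (mem_insert_self a s)
    rw [hall, Nat.cast_succ] at ha
    have hca : (0 : ℝ) ≤ c * (#s + 1) := by positivity
    rw [sum_insert has, card_insert_of_notMem has, sum_range_succ, add_comm]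
    refine add_le_add (ih fun k hk => ?_) (hF hca (hca.trans ha) ha)
    refine le_trans ?_ (hw k (mem_insert_of_mem hk))
    gcongr
    exact subset_insert a s

theorem antitoneOn_one_div_one_add_sq_mul {c : ℝ} (hc : 0 ≤ c) :
    AntitoneOn (fun x : ℝ => 1 / (1 + (c * x) ^ 2)) (Set.Ici 0) := by
  intro x hx y hy hxy
  have : 0 ≤ c * x := mul_nonneg hc hx
  have : c * x ≤ c * y := by gcongr
  dsimp only
  gcongr

theorem sum_range_one_div_one_add_sq_mul_le {c : ℝ} (hc : 0 < c) (m : ℕ) :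
    ∑ i ∈ range m, 1 / (1 + (c * (i + 1)) ^ 2) ≤ π / (2 * c) := by
  calc ∑ i ∈ range m, 1 / (1 + (c * (i + 1)) ^ 2)
      ≤ ∫ x in (0 : ℝ)..0 + m, 1 / (1 + (c * x) ^ 2) := by
        simpa using ((antitoneOn_one_div_one_add_sq_mul hc.le).mono
          Set.Icc_subset_Ici_self).sum_le_integral (x₀ := 0) (a := m)
    _ = arctan (c * m) / c := by
        rw [intervalIntegral.integral_comp_mul_left (fun x => 1 / (1 + x ^ 2)) hc.ne',
          integral_one_div_one_add_sq]
        simp [div_eq_inv_mul]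
    _ ≤ π / (2 * c) := by
        rw [div_le_div_iff₀ hc (by positivity)]
        nlinarith [arctan_lt_pi_div_two (c * m)]

theorem sum_one_div_one_add_sq_mul_sq_le_of_separated {ι : Type*} {s : Finset ι} {x : ι → ℝ}
    {δ Q : ℝ} (hδ : 0 < δ) (hQ : 0 < Q) (hx : ∀ k ∈ s, δ / 2 ≤ |x k|)
    (hsep : ∀ a ∈ s, ∀ b ∈ s, a ≠ b → δ ≤ |x a - x b|) :
    ∑ k ∈ s, 1 / (1 + Q ^ 2 * |x k| ^ 2) ≤ 2 * π / (Q * δ) := by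
  classical
  have hcount : ∀ k ∈ s, δ / 4 * #{k' ∈ s | |x k'| ≤ |x k|} ≤ |x k| := fun k hk => calc
    δ / 4 * #{k' ∈ s | |x k'| ≤ |x k|} ≤ δ / 4 * ((|x k| - -|x k|) / δ + 1) := by
        gcongr
        exact card_le_div_add_one_of_separated hδ (neg_le_self (abs_nonneg _))
          (fun k' hk' => abs_le.1 (mem_filter.1 hk').2)
          (fun a ha b hb => hsep a (mem_filter.1 ha).1 b (mem_filter.1 hb).1)
    _ = |x k| / 2 + δ / 4 := by field_simp; ring
    _ ≤ |x k| := by linarith [hx k hk]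
  calc ∑ k ∈ s, 1 / (1 + Q ^ 2 * |x k| ^ 2) = ∑ k ∈ s, 1 / (1 + (Q * |x k|) ^ 2) := by
        simp only [mul_pow]
    _ ≤ ∑ i ∈ range #s, 1 / (1 + (Q * (δ / 4 * (i + 1))) ^ 2) :=
        sum_le_sum_range_of_mul_card_le (by positivity)
          (antitoneOn_one_div_one_add_sq_mul hQ.le) hcount
    _ = ∑ i ∈ range #s, 1 / (1 + (Q * δ / 4 * (i + 1)) ^ 2) := by
        simp only [mul_div_assoc, mul_assoc]
    _ ≤ π / (2 * (Q * δ / 4)) := sum_range_one_div_one_add_sq_mul_le (by positivity) _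
    _ = 2 * π / (Q * δ) := by field_simp; ring

theorem irrational_gaussMap {x : ℝ} (h : Irrational x) : Irrational (gaussMap x) := by
  rw [gaussMap, Int.fract]
  exact h.inv.sub_intCast _

theorem gaussMap_mem_Ioo {x : ℝ} (h : Irrational x) : gaussMap x ∈ Set.Ioo 0 1 :=
  ⟨(Int.fract_nonneg _).lt_of_ne fun h0 => (irrational_gaussMap h).ne_zero h0.symm,
    Int.fract_lt_one _⟩

theorem gaussMap_of_nonneg {x : ℝ} (hx : 0 ≤ x) : gaussMap x = x⁻¹ - ⌊x⁻¹⌋₊ := by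
  rw [gaussMap, Int.fract, natCast_floor_eq_intCast_floor (inv_nonneg.2 hx)]

def gaussOrbit (ω : ℝ) (n : ℕ) : ℝ := gaussMap^[n] ω

section

variable {ω : ℝ}

theorem gaussOrbit_succ (n : ℕ) : gaussOrbit ω (n + 1) = gaussMap (gaussOrbit ω n) :=
  Function.iterate_succ_apply' _ _ _

theorem cfA_succ (n : ℕ) : cfA ω (n + 1) = ⌊(gaussOrbit ω n)⁻¹⌋₊ := rfl

theorem irrational_gaussOrbit (hirr : Irrational ω) (n : ℕ) : Irrational (gaussOrbit ω n) := by
  induction n with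
  | zero => exact hirr
  | succ n ih => rw [gaussOrbit_succ]; exact irrational_gaussMap ih

theorem gaussOrbit_mem_Ioo (hω : ω ∈ Set.Ioo 0 1) (hirr : Irrational ω) (n : ℕ) :
    gaussOrbit ω n ∈ Set.Ioo 0 1 := by
  cases n with
  | zero => exact hω
  | succ n => rw [gaussOrbit_succ]; exact gaussMap_mem_Ioo (irrational_gaussOrbit hirr n)

theorem gaussOrbit_succ_eq_inv_sub_cfA (hω : ω ∈ Set.Ioo 0 1) (hirr : Irrational ω) (n : ℕ) :
    gaussOrbit ω (n + 1) = (gaussOrbit ω n)⁻¹ - cfA ω (n + 1) := by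
  rw [gaussOrbit_succ, cfA_succ, gaussMap_of_nonneg (gaussOrbit_mem_Ioo hω hirr n).1.le]

theorem one_le_cfA (hω : ω ∈ Set.Ioo 0 1) (hirr : Irrational ω) (n : ℕ) :
    1 ≤ cfA ω (n + 1) := by
  have h := gaussOrbit_mem_Ioo hω hirr n
  rw [cfA_succ]
  exact Nat.le_floor (by simpa using ((one_lt_inv₀ h.1).2 h.2).le)

-- `cfErr ω n = |q_{n-1} ω - p_{n-1}|`
def cfErr (ω : ℝ) (n : ℕ) : ℝ := ∏ i ∈ range n, gaussOrbit ω i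

-- `cfDen ω n = q_{n-1}` and `cfNum ω n = p_{n-1}`: index 0 carries `q_{-1} = 0`, `p_{-1} = 1`.
def cfDen (ω : ℝ) : ℕ → ℤ
  | 0 => 0
  | 1 => 1
  | n + 2 => cfA ω (n + 1) * cfDen ω (n + 1) + cfDen ω n

def cfNum (ω : ℝ) : ℕ → ℤ
  | 0 => 1
  | 1 => 0
  | n + 2 => cfA ω (n + 1) * cfNum ω (n + 1) + cfNum ω n

theorem cfErr_pos (hω : ω ∈ Set.Ioo 0 1) (hirr : Irrational ω) (n : ℕ) : 0 < cfErr ω n :=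
  prod_pos fun i _ => (gaussOrbit_mem_Ioo hω hirr i).1

theorem cfErr_add_two (hω : ω ∈ Set.Ioo 0 1) (hirr : Irrational ω) (n : ℕ) :
    cfErr ω (n + 2) = cfErr ω n - cfA ω (n + 1) * cfErr ω (n + 1) := by
  have h0 := (gaussOrbit_mem_Ioo hω hirr n).1.ne'
  simp only [cfErr, prod_range_succ, gaussOrbit_succ_eq_inv_sub_cfA hω hirr n]
  field_simp

theorem cfDen_mul_sub_cfNum (hω : ω ∈ Set.Ioo 0 1) (hirr : Irrational ω) (n : ℕ) :
    cfDen ω n * ω - cfNum ω n = (-1) ^ (n + 1) * cfErr ω n := by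
  induction n using Nat.twoStepInduction with
  | zero => simp [cfDen, cfNum, cfErr]
  | one => simp [cfDen, cfNum, cfErr, gaussOrbit]
  | more n ih₀ ih₁ =>
    simp only [cfDen, cfNum, cfErr_add_two hω hirr, Int.cast_add, Int.cast_mul, Int.cast_natCast]
    linear_combination (cfA ω (n + 1) : ℝ) * ih₁ + ih₀

theorem cfDen_succ_mul_cfErr_add (hω : ω ∈ Set.Ioo 0 1) (hirr : Irrational ω) (n : ℕ) :
    cfDen ω (n + 1) * cfErr ω n + cfDen ω n * cfErr ω (n + 1) = 1 := by
  induction n with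
  | zero => simp [cfDen, cfErr]
  | succ n ih =>
    simp only [cfDen, cfErr_add_two hω hirr, Int.cast_add, Int.cast_mul, Int.cast_natCast]
    linear_combination ih

theorem cfDen_succ_mul_cfNum_sub (ω : ℝ) (n : ℕ) :
    cfDen ω (n + 1) * cfNum ω n - cfDen ω n * cfNum ω (n + 1) = (-1) ^ n := by
  induction n with
  | zero => simp [cfDen, cfNum]
  | succ n ih =>
    simp only [cfDen, cfNum]
    linear_combination -ih

theorem cfDen_nonneg_and_le_succ (hω : ω ∈ Set.Ioo 0 1) (hirr : Irrational ω) (n : ℕ) :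
    0 ≤ cfDen ω n ∧ cfDen ω n ≤ cfDen ω (n + 1) := by
  induction n with
  | zero => simp [cfDen]
  | succ n ih =>
    have ha : (1 : ℤ) ≤ cfA ω (n + 1) := by exact_mod_cast one_le_cfA hω hirr n
    refine ⟨ih.1.trans ih.2, ?_⟩
    simp only [cfDen]
    nlinarith

theorem cast_cfQ (ω : ℝ) (n : ℕ) : (cfQ ω n : ℤ) = cfDen ω (n + 1) := by
  induction n using Nat.twoStepInduction with
  | zero => simp [cfQ, cfDen]
  | one => simp [cfQ, cfDen]
  | more n ih₀ ih₁ =>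
    rw [cfQ]
    push_cast
    rw [ih₀, ih₁]
    rfl

theorem cfErr_succ_le (hω : ω ∈ Set.Ioo 0 1) (hirr : Irrational ω) (n : ℕ) :
    cfErr ω (n + 1) ≤ cfErr ω n := by
  rw [cfErr, prod_range_succ]
  exact mul_le_of_le_one_right (cfErr_pos hω hirr n).le (gaussOrbit_mem_Ioo hω hirr n).2.le

theorem one_le_two_mul_cfDen_succ_mul_cfErr (hω : ω ∈ Set.Ioo 0 1) (hirr : Irrational ω)
    (n : ℕ) :
    1 ≤ 2 * cfDen ω (n + 1) * cfErr ω n := by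
  have hden := cfDen_nonneg_and_le_succ hω hirr n
  have h0 : (0 : ℝ) ≤ cfDen ω n := by exact_mod_cast hden.1
  have h1 : (cfDen ω n : ℝ) ≤ cfDen ω (n + 1) := by exact_mod_cast hden.2
  nlinarith [cfDen_succ_mul_cfErr_add hω hirr n, cfErr_succ_le hω hirr n,
    cfErr_pos hω hirr (n + 1)]

theorem abs_cfDen_mul_sub_cfNum (hω : ω ∈ Set.Ioo 0 1) (hirr : Irrational ω) (n : ℕ) :
    |cfDen ω n * ω - cfNum ω n| = cfErr ω n := by
  rw [cfDen_mul_sub_cfNum hω hirr, abs_mul, abs_pow, abs_neg, abs_one, one_pow, one_mul,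
    abs_of_pos (cfErr_pos hω hirr n)]

theorem distZ_cfDen_mul_le (hω : ω ∈ Set.Ioo 0 1) (hirr : Irrational ω) (n : ℕ) :
    distZ (cfDen ω n * ω) ≤ cfErr ω n :=
  (round_le _ (cfNum ω n)).trans (abs_cfDen_mul_sub_cfNum hω hirr n).le

-- The best approximation property of the convergents.
theorem cfErr_le_abs_mul_sub (hω : ω ∈ Set.Ioo 0 1) (hirr : Irrational ω) {n : ℕ} {r s : ℤ}
    (hr₀ : r ≠ 0) (hr : |r| < cfDen ω (n + 1)) : cfErr ω n ≤ |r * ω - s| := by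
  -- coordinates of `(r, s)` in the unimodular basis `(q_n, p_n)`, `(q_{n-1}, p_{n-1})`
  set u : ℤ := (-1) ^ n * (r * cfNum ω n - s * cfDen ω n)
  set v : ℤ := (-1) ^ n * (s * cfDen ω (n + 1) - r * cfNum ω (n + 1))
  have hdet := cfDen_succ_mul_cfNum_sub ω n
  have hsq : ((-1) ^ n * (-1) ^ n : ℤ) = 1 := by rw [← mul_pow]; simp
  have hr' : u * cfDen ω (n + 1) + v * cfDen ω n = r := by
    linear_combination ((-1) ^ n * r) * hdet + r * hsq
  have hs' : u * cfNum ω (n + 1) + v * cfNum ω n = s := by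
    linear_combination ((-1) ^ n * s) * hdet + s * hsq
  have hsplit : (r : ℝ) * ω - s = (-1) ^ n * (u * cfErr ω (n + 1) - v * cfErr ω n) := by
    rw [← hr', ← hs']
    push_cast
    linear_combination (u : ℝ) * cfDen_mul_sub_cfNum hω hirr (n + 1) +
      (v : ℝ) * cfDen_mul_sub_cfNum hω hirr n
  clear_value u v
  rw [hsplit, abs_mul, abs_pow, abs_neg, abs_one, one_pow, one_mul]
  have hden := cfDen_nonneg_and_le_succ hω hirr n
  have he := cfErr_pos hω hirr n
  have he' := cfErr_pos hω hirr (n + 1)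
  obtain ⟨hr₁, hr₂⟩ := abs_lt.1 hr
  -- `u` and `v` cannot have the same strict sign, and `v ≠ 0`, since `0 < |r| < q_n`
  rcases lt_trichotomy v 0 with hv | hv | hv
  · have hu : (0 : ℝ) ≤ u := by exact_mod_cast (show 0 ≤ u by nlinarith)
    have hv' : (v : ℝ) ≤ -1 := by exact_mod_cast (show v ≤ -1 by omega)
    exact le_abs.2 (Or.inl (by nlinarith))
  · rw [hv, zero_mul, add_zero] at hr'
    rcases lt_trichotomy u 0 with hu | rfl | hu
    · nlinarith
    · omega
    · nlinarith
  · have hu : (u : ℝ) ≤ 0 := by exact_mod_cast (show u ≤ 0 by nlinarith)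
    have hv' : (1 : ℝ) ≤ v := by exact_mod_cast hv
    exact le_abs.2 (Or.inr (by nlinarith))

theorem three_div_four_mul_cfErr_le_abs_mul_sub (hω : ω ∈ Set.Ioo 0 1) (hirr : Irrational ω)
    {n : ℕ} {ℓ k : ℤ} (hℓ₀ : 0 ≤ ℓ) (hℓ : (ℓ : ℝ) ≤ cfA ω (n + 1) / 4)
    (hk₁ : ℓ * cfDen ω (n + 1) < k) (hk₂ : k < (ℓ + 1) * cfDen ω (n + 1)) (t : ℤ) :
    3 / 4 * cfErr ω n ≤ |k * ω - t| := by
  have hbest := cfErr_le_abs_mul_sub hω hirr (n := n) (r := k - ℓ * cfDen ω (n + 1))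
    (s := t - ℓ * cfNum ω (n + 1)) (by omega) (by rw [abs_lt]; constructor <;> linarith)
  -- `|ℓ (q_n ω - p_n)| = ℓ ‖q_n ω‖ ≤ a_{n+1} ‖q_n ω‖ / 4 ≤ ‖q_{n-1} ω‖ / 4`
  have hshift : |(ℓ : ℝ) * (cfDen ω (n + 1) * ω - cfNum ω (n + 1))| ≤ cfErr ω n / 4 := by
    rw [abs_mul, abs_cfDen_mul_sub_cfNum hω hirr, abs_of_nonneg (by exact_mod_cast hℓ₀)]
    nlinarith [cfErr_add_two hω hirr n, cfErr_pos hω hirr (n + 1), cfErr_pos hω hirr (n + 2)]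
  have hsplit : ((k - ℓ * cfDen ω (n + 1) : ℤ) : ℝ) * ω - (t - ℓ * cfNum ω (n + 1) : ℤ)
      = (k * ω - t) - ℓ * (cfDen ω (n + 1) * ω - cfNum ω (n + 1)) := by
    push_cast
    ring
  rw [hsplit] at hbest
  linarith [abs_sub ((k : ℝ) * ω - t) (ℓ * (cfDen ω (n + 1) * ω - cfNum ω (n + 1)))]

theorem cfErr_le_abs_sub_round_sub (hω : ω ∈ Set.Ioo 0 1) (hirr : Irrational ω) {n : ℕ}
    {a b : ℤ} (hab : a ≠ b) (h : |a - b| < cfDen ω (n + 1)) :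
    cfErr ω n ≤ |(a * ω - round (a * ω)) - (b * ω - round (b * ω))| := by
  have := cfErr_le_abs_mul_sub hω hirr (sub_ne_zero.2 hab) h
    (s := round (a * ω) - round (b * ω))
  push_cast at this
  convert this using 2
  ring

end

/-- lower bound on `‖kω‖` for `ℓq_n < k < (ℓ+1)q_n`, and the
resulting bound on the Fejér-type sum. -/
theorem norm_lower_bound_and_fejer_sum
    (ω : ℝ) (hω : ω ∈ Set.Ioo (0:ℝ) 1) (hirr : Irrational ω) (n : ℕ) (hn : 1 ≤ n)
    (ℓ : ℤ) (hℓ₁ : 1 ≤ ℓ) (hℓ₂ : (ℓ : ℝ) ≤ (cfA ω (n + 1) : ℝ) / 4) :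
    (∀ k : ℤ, ℓ * (cfQ ω n : ℤ) < k → k < (ℓ + 1) * (cfQ ω n : ℤ) →
      distZ ((k : ℝ) * ω) ≥ (3 / 4) * distZ ((cfQ ω (n - 1) : ℝ) * ω)) ∧
    (∀ Q : ℝ, 0 < Q →
      ∑ k ∈ Finset.Ioo (ℓ * (cfQ ω n : ℤ)) ((ℓ + 1) * (cfQ ω n : ℤ)),
          1 / (1 + Q ^ 2 * distZ ((k : ℝ) * ω) ^ 2)
        ≤ 4 * Real.pi * (cfQ ω n : ℝ) / Q) := by
  have hq : ((cfQ ω n : ℤ) : ℝ) = cfDen ω (n + 1) := by rw [cast_cfQ]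
  have hq' : ((cfQ ω (n - 1) : ℤ) : ℝ) = cfDen ω n := by rw [cast_cfQ, Nat.sub_add_cancel hn]
  push_cast at hq hq'
  have hlower : ∀ k ∈ Ioo (ℓ * (cfQ ω n : ℤ)) ((ℓ + 1) * cfQ ω n), ∀ t : ℤ,
      3 / 4 * cfErr ω n ≤ |k * ω - t| := fun k hk t => by
    rw [cast_cfQ, mem_Ioo] at hk
    exact three_div_four_mul_cfErr_le_abs_mul_sub hω hirr (by omega) hℓ₂ hk.1 hk.2 t
  refine ⟨fun k hk₁ hk₂ => ?_, fun Q hQ => ?_⟩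
  · calc 3 / 4 * distZ ((cfQ ω (n - 1) : ℝ) * ω) ≤ 3 / 4 * cfErr ω n := by
          rw [hq']; gcongr; exact distZ_cfDen_mul_le hω hirr n
      _ ≤ distZ (k * ω) := hlower k (mem_Ioo.2 ⟨hk₁, hk₂⟩) _
  · calc _ ≤ 2 * π / (Q * cfErr ω n) :=
          sum_one_div_one_add_sq_mul_sq_le_of_separated (cfErr_pos hω hirr n) hQ
            (fun k hk => by linarith [hlower k hk (round (k * ω)), cfErr_pos hω hirr n])
            (fun a ha b hb hab => cfErr_le_abs_sub_round_sub hω hirr hab (by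
              rw [cast_cfQ, mem_Ioo] at ha hb
              rw [abs_sub_lt_iff]; constructor <;> linarith))
      _ ≤ 4 * π * cfQ ω n / Q := by
          rw [hq, div_le_div_iff₀ (mul_pos hQ (cfErr_pos hω hirr n)) hQ]
          nlinarith [one_le_two_mul_cfDen_succ_mul_cfErr hω hirr n, mul_pos pi_pos hQ]

end
end

section
/- Let ω ∈ (0,1) be irrational, let n ≥ 1, let δ ∈ (0,1), let Q ∈ ℕ with Q ≥ 1, and let ℓ be an integer with 1 ≤ ℓ ≤ q_{n+1}^{1−δ}/Q. Then |F_Q(ℓ·q_n) − 1| ≤ 2π·q_{n+1}^{−δ}. -/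
open MeasureTheory Filter

noncomputable section

def cfX (ω : ℝ) (k : ℕ) : ℝ := gaussMap^[k] ω

lemma cfX_mem (ω : ℝ) (hω : ω ∈ Set.Ioo (0:ℝ) 1) (hirr : Irrational ω) (k : ℕ) :
    Irrational (cfX ω k) ∧ cfX ω k ∈ Set.Ioo (0:ℝ) 1 := by
  induction k with
  | zero => exact ⟨hirr, hω⟩
  | succ k ih =>
    obtain ⟨hi, h0, h1⟩ := ih
    have : cfX ω (k+1) = gaussMap (cfX ω k) := by
      simp [cfX, Function.iterate_succ_apply']
    rw [this]
    have hinv : Irrational (cfX ω k)⁻¹ := hi.inv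
    have hfr : Irrational (Int.fract (cfX ω k)⁻¹) := by
      unfold Int.fract
      exact hinv.sub_intCast _
    refine ⟨hfr, ?_, Int.fract_lt_one _⟩
    rcases lt_or_eq_of_le (Int.fract_nonneg (cfX ω k)⁻¹) with h | h
    · exact h
    · exfalso; exact (hfr.ne_int 0) (by simpa using h.symm)

lemma cfX_inv (ω : ℝ) (hω : ω ∈ Set.Ioo (0:ℝ) 1) (hirr : Irrational ω) (k : ℕ) :
    (cfX ω k)⁻¹ = (cfA ω (k+1) : ℝ) + cfX ω (k+1) := by
  obtain ⟨hi, h0, h1⟩ := cfX_mem ω hω hirr k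
  have hstep : cfX ω (k+1) = gaussMap (cfX ω k) := by
    simp [cfX, Function.iterate_succ_apply']
  have ha : cfA ω (k+1) = ⌊(cfX ω k)⁻¹⌋₊ := by simp [cfA, cfX]
  have hpos : (0:ℝ) < (cfX ω k)⁻¹ := inv_pos.2 h0
  have hfl : ((⌊(cfX ω k)⁻¹⌋₊ : ℤ) : ℝ) = (⌊(cfX ω k)⁻¹⌋ : ℝ) := by
    rw [Int.natCast_floor_eq_floor hpos.le]
  rw [hstep, ha, gaussMap]
  have : Int.fract (cfX ω k)⁻¹ = (cfX ω k)⁻¹ - ⌊(cfX ω k)⁻¹⌋ := rfl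
  rw [this]
  push_cast [← hfl]
  ring

-- cfA ω (k+1) ≥ 1
lemma cfA_pos (ω : ℝ) (hω : ω ∈ Set.Ioo (0:ℝ) 1) (hirr : Irrational ω) (k : ℕ) :
    1 ≤ cfA ω (k+1) := by
  obtain ⟨hi, h0, h1⟩ := cfX_mem ω hω hirr k
  have ha : cfA ω (k+1) = ⌊(cfX ω k)⁻¹⌋₊ := by simp [cfA, cfX]
  rw [ha]
  exact (Nat.one_le_floor_iff _).mpr (one_le_inv_iff₀.mpr ⟨h0, h1.le⟩)

lemma cfQ_pos (ω : ℝ) (hω : ω ∈ Set.Ioo (0:ℝ) 1) (hirr : Irrational ω) (n : ℕ) :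
    1 ≤ cfQ ω n := by
  induction n using Nat.strong_induction_on with
  | _ n ih =>
    match n with
    | 0 => simp [cfQ]
    | 1 => simpa [cfQ] using cfA_pos ω hω hirr 0
    | n + 2 =>
      have h1 := ih (n+1) (by omega)
      have h2 := cfA_pos ω hω hirr (n+1)
      calc 1 ≤ cfA ω (n+2) * cfQ ω (n+1) := Nat.one_le_iff_ne_zero.mpr (by positivity)
        _ ≤ cfQ ω (n+2) := Nat.le_add_right _ _

/-- Numerators. -/
def cfP (ω : ℝ) : ℕ → ℤ
  | 0 => 0
  | 1 => 1
  | n + 2 => cfA ω (n + 2) * cfP ω (n + 1) + cfP ω n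

/-- Product of Gauss iterates. -/
def cfProd (ω : ℝ) (n : ℕ) : ℝ := ∏ k ∈ Finset.range (n+1), cfX ω k

lemma cfProd_pos (ω : ℝ) (hω : ω ∈ Set.Ioo (0:ℝ) 1) (hirr : Irrational ω) (n : ℕ) :
    0 < cfProd ω n :=
  Finset.prod_pos fun k _ => (cfX_mem ω hω hirr k).2.1

lemma cfProd_succ (ω : ℝ) (n : ℕ) : cfProd ω (n+1) = cfProd ω n * cfX ω (n+1) :=
  Finset.prod_range_succ _ _

lemma cfProd_lt_one (ω : ℝ) (hω : ω ∈ Set.Ioo (0:ℝ) 1) (hirr : Irrational ω) (n : ℕ) :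
    cfProd ω n < 1 := by
  induction n with
  | zero => simpa [cfProd, cfX] using hω.2
  | succ n ih =>
    rw [cfProd_succ]
    have h := cfProd_pos ω hω hirr n
    have h2 := (cfX_mem ω hω hirr (n+1)).2
    nlinarith [h2.1, h2.2]

/-- Key identity: qₙ ω - pₙ = (-1)ⁿ ∏ₖ xₖ. -/
lemma cfQ_mul_sub (ω : ℝ) (hω : ω ∈ Set.Ioo (0:ℝ) 1) (hirr : Irrational ω) (n : ℕ) :
    (cfQ ω n : ℝ) * ω - (cfP ω n : ℝ) = (-1:ℝ)^n * cfProd ω n := by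
  induction n using Nat.strong_induction_on with
  | _ n ih =>
    match n with
    | 0 => simp [cfQ, cfP, cfProd, cfX]
    | 1 =>
      have h := cfX_inv ω hω hirr 0
      have h0 : cfX ω 0 = ω := rfl
      have hω0 : ω ≠ 0 := ne_of_gt hω.1
      rw [h0] at h
      simp only [cfQ, cfP, cfProd]
      have : ∏ k ∈ Finset.range 2, cfX ω k = ω * cfX ω 1 := by
        simp [Finset.prod_range_succ, h0]
      rw [this]
      have hh : (cfA ω 1 : ℝ) = ω⁻¹ - cfX ω 1 := by linarith
      push_cast
      rw [hh]
      field_simp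
      ring
    | n + 2 =>
      have ih1 := ih (n+1) (by omega)
      have ih0 := ih n (by omega)
      have hq : (cfQ ω (n+2) : ℝ) = (cfA ω (n+2) : ℝ) * cfQ ω (n+1) + cfQ ω n := by
        simp [cfQ]
      have hp : (cfP ω (n+2) : ℝ) = (cfA ω (n+2) : ℝ) * cfP ω (n+1) + cfP ω n := by
        simp [cfP]
      have hx := cfX_inv ω hω hirr (n+1)
      have hxpos := (cfX_mem ω hω hirr (n+1)).2.1
      have hxne : cfX ω (n+1) ≠ 0 := ne_of_gt hxpos
      have hA : (cfA ω (n+2) : ℝ) = (cfX ω (n+1))⁻¹ - cfX ω (n+2) := by linarith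
      have e1 : cfProd ω (n+1) = cfProd ω n * cfX ω (n+1) := cfProd_succ ω n
      have e2 : cfProd ω (n+2) = cfProd ω n * cfX ω (n+1) * cfX ω (n+2) := by
        rw [cfProd_succ, e1]
      calc (cfQ ω (n+2) : ℝ) * ω - cfP ω (n+2)
          = (cfA ω (n+2) : ℝ) * ((cfQ ω (n+1) : ℝ) * ω - cfP ω (n+1))
            + ((cfQ ω n : ℝ) * ω - cfP ω n) := by rw [hq, hp]; ring
        _ = (cfA ω (n+2) : ℝ) * ((-1)^(n+1) * cfProd ω (n+1)) + (-1)^n * cfProd ω n := by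
            rw [ih1, ih0]
        _ = (-1)^(n+2) * cfProd ω (n+2) := by
            rw [hA, e1, e2]
            field_simp
            ring

lemma cfQ_prod_identity (ω : ℝ) (hω : ω ∈ Set.Ioo (0:ℝ) 1) (hirr : Irrational ω) (n : ℕ) :
    (cfQ ω (n+1) : ℝ) * cfProd ω n + (cfQ ω n : ℝ) * cfProd ω (n+1) = 1 := by
  induction n with
  | zero =>
    have h := cfX_inv ω hω hirr 0
    have h0 : cfX ω 0 = ω := rfl
    have hω0 : ω ≠ 0 := ne_of_gt hω.1
    rw [h0] at h
    have e0 : cfProd ω 0 = ω := by simp [cfProd, h0]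
    have e1 : cfProd ω 1 = ω * cfX ω 1 := by rw [cfProd_succ, e0]
    have hq0 : cfQ ω 0 = 1 := rfl
    have hq1 : (cfQ ω 1 : ℝ) = (cfA ω 1 : ℝ) := by simp [cfQ]
    rw [e0, e1, hq0, hq1]
    have : (cfA ω 1 : ℝ) = ω⁻¹ - cfX ω 1 := by linarith
    rw [this]
    field_simp
    push_cast; ring
  | succ n ih =>
    have hq : (cfQ ω (n+2) : ℝ) = (cfA ω (n+2) : ℝ) * cfQ ω (n+1) + cfQ ω n := by
      simp [cfQ]
    have hx := cfX_inv ω hω hirr (n+1)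
    have hxpos := (cfX_mem ω hω hirr (n+1)).2.1
    have hxne : cfX ω (n+1) ≠ 0 := ne_of_gt hxpos
    have hA : (cfA ω (n+2) : ℝ) = (cfX ω (n+1))⁻¹ - cfX ω (n+2) := by linarith
    have e1 : cfProd ω (n+1) = cfProd ω n * cfX ω (n+1) := cfProd_succ ω n
    have e2 : cfProd ω (n+2) = cfProd ω n * cfX ω (n+1) * cfX ω (n+2) := by
      rw [cfProd_succ, e1]
    calc (cfQ ω (n+2) : ℝ) * cfProd ω (n+1) + (cfQ ω (n+1) : ℝ) * cfProd ω (n+2)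
        = ((cfX ω (n+1))⁻¹ * cfX ω (n+1)) * ((cfQ ω (n+1) : ℝ) * cfProd ω n)
          + (cfQ ω n : ℝ) * cfProd ω (n+1) := by rw [hq, hA, e2, e1]; ring
      _ = 1 := by rw [inv_mul_cancel₀ hxne]; simpa using ih

lemma cfProd_le (ω : ℝ) (hω : ω ∈ Set.Ioo (0:ℝ) 1) (hirr : Irrational ω) (n : ℕ) :
    cfProd ω n ≤ 1 / (cfQ ω (n+1) : ℝ) := by
  have hid := cfQ_prod_identity ω hω hirr n
  have h1 : (0:ℝ) < cfQ ω (n+1) := by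
    exact_mod_cast Nat.lt_of_lt_of_le Nat.zero_lt_one (cfQ_pos ω hω hirr (n+1))
  have h2 : (0:ℝ) ≤ (cfQ ω n : ℝ) * cfProd ω (n+1) :=
    mul_nonneg (Nat.cast_nonneg _) (cfProd_pos ω hω hirr (n+1)).le
  rw [le_div_iff₀ h1]
  linarith

lemma fejer_weight_sum (Q : ℕ) (hQ : 1 ≤ Q) :
    ∑ j ∈ Finset.Ioo (-(Q:ℤ)) (Q:ℤ), ((Q:ℤ) - |j|) = (Q:ℤ)^2 := by
  induction Q with
  | zero => omega
  | succ Q ih =>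
    rcases Nat.eq_or_lt_of_le hQ with h | h
    · have : Q = 0 := by omega
      subst this
      decide
    · have hQ1 : 1 ≤ Q := by omega
      have hins : Finset.Ioo (-(Q+1:ℤ)) (Q+1:ℤ)
          = insert (-(Q:ℤ)) (insert (Q:ℤ) (Finset.Ioo (-(Q:ℤ)) (Q:ℤ))) := by
        ext j; simp; omega
      have hcard : ((Finset.Ioo (-(Q:ℤ)) (Q:ℤ)).card : ℤ) = 2*(Q:ℤ) - 1 := by
        rw [Int.card_Ioo]; omega
      have hmem1 : (-(Q:ℤ)) ∉ insert (Q:ℤ) (Finset.Ioo (-(Q:ℤ)) (Q:ℤ)) := by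
        intro hmem; simp at hmem; omega
      have hmem2 : (Q:ℤ) ∉ Finset.Ioo (-(Q:ℤ)) (Q:ℤ) := by
        intro hmem; simp at hmem
      push_cast
      rw [hins, Finset.sum_insert hmem1, Finset.sum_insert hmem2]
      have hsplit : ∑ j ∈ Finset.Ioo (-(Q:ℤ)) (Q:ℤ), ((Q:ℤ)+1 - |j|)
          = (∑ j ∈ Finset.Ioo (-(Q:ℤ)) (Q:ℤ), ((Q:ℤ) - |j|))
            + ((Finset.Ioo (-(Q:ℤ)) (Q:ℤ)).card : ℤ) := by
        have hcongr : ∀ j ∈ Finset.Ioo (-(Q:ℤ)) (Q:ℤ), (Q:ℤ)+1-|j| = ((Q:ℤ)-|j|) + 1 :=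
          fun j _ => by ring
        rw [Finset.sum_congr rfl hcongr, Finset.sum_add_distrib, Finset.sum_const,
          nsmul_eq_mul, mul_one]
      rw [hsplit, ih hQ1, hcard]
      have habs : |(-(Q:ℤ))| = (Q:ℤ) := by rw [abs_neg]; exact abs_of_nonneg (by positivity)
      rw [habs, abs_of_nonneg (by positivity : (0:ℤ) ≤ (Q:ℤ))]
      ring

lemma exp_I_sub_one_le (θ : ℝ) : ‖Complex.exp (θ * Complex.I) - 1‖ ≤ |θ| := by
  have h1 : Complex.exp (θ * Complex.I) - 1
      = ((Real.cos θ - 1 : ℝ) : ℂ) + ((Real.sin θ : ℝ) : ℂ) * Complex.I := by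
    rw [Complex.exp_mul_I]; push_cast; ring
  have h2 : ‖Complex.exp (θ * Complex.I) - 1‖ ^ 2 = 2 - 2 * Real.cos θ := by
    rw [h1, ← Complex.normSq_eq_norm_sq, Complex.normSq_add_mul_I]
    have := Real.sin_sq_add_cos_sq θ
    nlinarith
  have hcos : 1 - θ ^ 2 / 2 ≤ Real.cos θ := Real.one_sub_sq_div_two_le_cos
  have h3 : ‖Complex.exp (θ * Complex.I) - 1‖ ^ 2 ≤ |θ| ^ 2 := by
    rw [h2, sq_abs]; nlinarith
  have h4 := norm_nonneg (Complex.exp (θ * Complex.I) - 1)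
  nlinarith [abs_nonneg θ]


/-- the Fejér kernel is close to `1` at `ℓ·q_n` for small `ℓ`. -/
theorem fejer_kernel_close_to_one
    (ω : ℝ) (hω : ω ∈ Set.Ioo (0:ℝ) 1) (hirr : Irrational ω) (n : ℕ) (hn : 1 ≤ n)
    (δ : ℝ) (hδ : δ ∈ Set.Ioo (0:ℝ) 1) (Q : ℕ) (hQ : 1 ≤ Q)
    (ℓ : ℤ) (hℓ₁ : 1 ≤ ℓ) (hℓ₂ : (ℓ : ℝ) ≤ (cfQ ω (n + 1) : ℝ) ^ (1 - δ) / (Q : ℝ)) :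
    ‖fejer ω Q (ℓ * (cfQ ω n : ℤ)) - 1‖
      ≤ 2 * Real.pi * (cfQ ω (n + 1) : ℝ) ^ (-δ) := by
  set P : ℝ := cfProd ω n with hP
  have hPpos : 0 < P := cfProd_pos ω hω hirr n
  have hQpos : (0:ℝ) < Q := by exact_mod_cast hQ
  have hq'pos : (0:ℝ) < (cfQ ω (n+1) : ℝ) := by
    exact_mod_cast Nat.lt_of_lt_of_le Nat.zero_lt_one (cfQ_pos ω hω hirr (n+1))
  have hkey : (cfQ ω n : ℝ) * ω - (cfP ω n : ℝ) = (-1:ℝ)^n * P := cfQ_mul_sub ω hω hirr n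
  -- the weights
  set c : ℤ → ℝ := fun j => ((Q : ℝ) - |(j : ℝ)|) / (Q : ℝ) ^ 2 with hc
  have hcnonneg : ∀ j ∈ Finset.Ioo (-(Q:ℤ)) (Q:ℤ), 0 ≤ c j := by
    intro j hj
    simp only [Finset.mem_Ioo] at hj
    have : |(j:ℝ)| ≤ (Q:ℝ) := by
      rw [← Int.cast_abs]; exact_mod_cast abs_le.mpr ⟨by omega, by omega⟩
    exact div_nonneg (by linarith) (by positivity)
  have hcsum : ∑ j ∈ Finset.Ioo (-(Q:ℤ)) (Q:ℤ), c j = 1 := by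
    have := fejer_weight_sum Q hQ
    have h2 : ∑ j ∈ Finset.Ioo (-(Q:ℤ)) (Q:ℤ), ((Q:ℝ) - |(j:ℝ)|) = (Q:ℝ)^2 := by
      have := congrArg (fun z : ℤ => (z : ℝ)) this
      push_cast at this
      simpa using this
    simp only [hc, div_eq_mul_inv, ← Finset.sum_mul, h2]
    field_simp
  -- per-term bound
  set B : ℝ := 2 * Real.pi * (ℓ : ℝ) * (Q : ℝ) * P with hB
  have hterm : ∀ j ∈ Finset.Ioo (-(Q:ℤ)) (Q:ℤ),
      ‖Complex.exp (2 * Real.pi * Complex.I * ((ℓ * (cfQ ω n : ℤ) : ℤ) : ℂ) * (j : ℂ) * (ω : ℂ)) - 1‖ ≤ B := by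
    intro j hj
    simp only [Finset.mem_Ioo] at hj
    set θ : ℝ := 2 * Real.pi * ((ℓ : ℝ) * (j : ℝ) * ((-1:ℝ)^n * P)) with hθ
    have hsplit : 2 * Real.pi * Complex.I * ((ℓ * (cfQ ω n : ℤ) : ℤ) : ℂ) * (j : ℂ) * (ω : ℂ)
        = ((ℓ * j * cfP ω n : ℤ) : ℂ) * (2 * Real.pi * Complex.I) + (θ : ℝ) * Complex.I := by
      have : ((cfQ ω n : ℝ) * ω : ℝ) = (cfP ω n : ℝ) + (-1:ℝ)^n * P := by linarith
      have hC : ((cfQ ω n : ℝ) * ω : ℂ) = ((cfP ω n : ℝ) : ℂ) + (((-1:ℝ)^n * P : ℝ) : ℂ) := by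
        exact_mod_cast congrArg (fun x : ℝ => (x : ℂ)) this
      push_cast at hC ⊢
      rw [hθ]
      push_cast
      calc 2 * Real.pi * Complex.I * ((ℓ:ℂ) * (cfQ ω n : ℂ)) * (j:ℂ) * (ω:ℂ)
          = 2 * Real.pi * Complex.I * (ℓ:ℂ) * (j:ℂ) * ((cfQ ω n : ℂ) * (ω:ℂ)) := by ring
        _ = 2 * Real.pi * Complex.I * (ℓ:ℂ) * (j:ℂ) * ((cfP ω n : ℂ) + ((-1:ℂ)^n * (P:ℂ))) := by
            rw [← hC]
        _ = (ℓ:ℂ) * (j:ℂ) * (cfP ω n : ℂ) * (2 * Real.pi * Complex.I)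
            + (2 * Real.pi * ((ℓ:ℂ) * (j:ℂ) * ((-1:ℂ)^n * (P:ℂ)))) * Complex.I := by ring
    rw [hsplit, Complex.exp_add, Complex.exp_int_mul_two_pi_mul_I, one_mul]
    refine (exp_I_sub_one_le θ).trans ?_
    rw [hθ, hB]
    have hjQ : |(j:ℝ)| ≤ (Q:ℝ) := by
      rw [← Int.cast_abs]; exact_mod_cast abs_le.mpr ⟨by omega, by omega⟩
    have hℓpos : (0:ℝ) < (ℓ:ℝ) := by exact_mod_cast hℓ₁
    rw [abs_mul, abs_mul, abs_mul, abs_mul]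
    rw [abs_of_nonneg (by norm_num : (0:ℝ) ≤ 2), abs_of_nonneg Real.pi_pos.le,
      abs_of_pos hℓpos, abs_mul, abs_pow, abs_neg, abs_one, one_pow, one_mul,
      abs_of_pos hPpos]
    have h5 : (ℓ:ℝ) * |(j:ℝ)| * P ≤ (ℓ:ℝ) * (Q:ℝ) * P :=
      mul_le_mul_of_nonneg_right (mul_le_mul_of_nonneg_left hjQ hℓpos.le) hPpos.le
    have h6 := mul_le_mul_of_nonneg_left h5 (by positivity : (0:ℝ) ≤ 2 * Real.pi)
    linarith
  -- sum manipulation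
  set S := Finset.Ioo (-(Q:ℤ)) (Q:ℤ) with hS
  set e : ℤ → ℂ := fun j =>
    Complex.exp (2 * Real.pi * Complex.I * ((ℓ * (cfQ ω n : ℤ) : ℤ) : ℂ) * (j : ℂ) * (ω : ℂ))
    with he
  have hone : ∑ j ∈ S, ((c j : ℝ) : ℂ) = 1 := by
    rw [← Complex.ofReal_sum, hcsum, Complex.ofReal_one]
  have hstep1 : fejer ω Q (ℓ * (cfQ ω n : ℤ)) - 1
      = ∑ j ∈ S, ((c j : ℝ) : ℂ) * (e j - 1) := by
    have hfe : fejer ω Q (ℓ * (cfQ ω n : ℤ)) = ∑ j ∈ S, ((c j : ℝ) : ℂ) * e j := rfl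
    have hsub : ∑ j ∈ S, ((c j : ℝ) : ℂ) * (e j - 1)
        = (∑ j ∈ S, ((c j : ℝ) : ℂ) * e j) - ∑ j ∈ S, ((c j : ℝ) : ℂ) := by
      rw [← Finset.sum_sub_distrib]
      exact Finset.sum_congr rfl fun j _ => by ring
    rw [hfe, hsub, hone]
  have hstep2 : ‖fejer ω Q (ℓ * (cfQ ω n : ℤ)) - 1‖ ≤ B := by
    rw [hstep1]
    refine (norm_sum_le _ _).trans ?_
    have hBnn : 0 ≤ B := by
      have : (0:ℝ) < (ℓ:ℝ) := by exact_mod_cast hℓ₁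
      rw [hB]; positivity
    calc ∑ j ∈ S, ‖((c j : ℝ) : ℂ) * (e j - 1)‖
        ≤ ∑ j ∈ S, c j * B := by
          refine Finset.sum_le_sum fun j hj => ?_
          rw [norm_mul, Complex.norm_of_nonneg (hcnonneg j hj)]
          exact mul_le_mul_of_nonneg_left (hterm j hj) (hcnonneg j hj)
      _ = B := by rw [← Finset.sum_mul, hcsum, one_mul]
  refine hstep2.trans ?_
  -- final arithmetic
  have hℓQ : (ℓ:ℝ) * (Q:ℝ) ≤ (cfQ ω (n+1) : ℝ) ^ (1 - δ) := by
    rw [div_eq_mul_inv] at hℓ₂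
    calc (ℓ:ℝ) * (Q:ℝ) ≤ ((cfQ ω (n+1) : ℝ) ^ (1 - δ) * (Q:ℝ)⁻¹) * (Q:ℝ) :=
          mul_le_mul_of_nonneg_right hℓ₂ hQpos.le
      _ = (cfQ ω (n+1) : ℝ) ^ (1 - δ) := by field_simp
  have hPle : P ≤ 1 / (cfQ ω (n+1) : ℝ) := cfProd_le ω hω hirr n
  have hrpow : (cfQ ω (n+1) : ℝ) ^ (1 - δ) * (1 / (cfQ ω (n+1) : ℝ))
      = (cfQ ω (n+1) : ℝ) ^ (-δ) := by
    rw [one_div, ← Real.rpow_neg_one (cfQ ω (n+1) : ℝ), ← Real.rpow_add hq'pos]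
    congr 1
    ring
  have hℓpos : (0:ℝ) < (ℓ:ℝ) := by exact_mod_cast hℓ₁
  have hmain : (ℓ:ℝ) * (Q:ℝ) * P ≤ (cfQ ω (n+1) : ℝ) ^ (-δ) := by
    calc (ℓ:ℝ) * (Q:ℝ) * P ≤ (cfQ ω (n+1) : ℝ) ^ (1 - δ) * (1 / (cfQ ω (n+1) : ℝ)) := by
          apply mul_le_mul hℓQ hPle hPpos.le (Real.rpow_nonneg hq'pos.le _)
      _ = _ := hrpow
  have := mul_le_mul_of_nonneg_left hmain (by positivity : (0:ℝ) ≤ 2 * Real.pi)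
  rw [hB]
  linarith

end
end
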